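/- arXiv:2311.15191 — 7 statements merged into one kernel-verified Lean document; each statement's English description precedes it below -/
import Mathlib

section
/- Let M₀ be a module over the center Z(T_q) of a quantum torus T_q and M = T_q ⊗_{Z(T_q)} M₀. For a prime ideal P of T_q with P₀ = P ∩ Z(T_q), the following are equivalent: (a) P is an associated prime of M; (b) P₀ is an associated prime of M₀; (c) P = ann_{T_q}(T_q·a) for some a ∈ M. -/
/-- A quantum torus over `K` attached to a multiplicatively skew-symmetric matrix `q`:
an algebra `T` with basis `(x^α)_{α ∈ ℤⁿ}` and multiplication
`x^α x^β = d(α,β) x^{α+β}` where `d(α,β) = ∏_{i>j} q_{ij}^{α_i β_j}`. -/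
structure QuantumTorus (K : Type) [Field K] (n : ℕ) (T : Type) [Ring T] [Algebra K T] where
  q : Fin n → Fin n → Kˣ
  q_diag : ∀ i, q i i = 1
  q_skew : ∀ i j, q j i = (q i j)⁻¹
  d : (Fin n → ℤ) → (Fin n → ℤ) → Kˣ
  d_eq : ∀ α β, d α β = ∏ i : Fin n, ∏ j : Fin n,
      if (j : ℕ) < (i : ℕ) then q i j ^ (α i * β j) else 1
  x : (Fin n → ℤ) → T
  basis : Module.Basis (Fin n → ℤ) K T
  basis_eq : ∀ α, basis α = x α
  x_mul : ∀ α β, x α * x β = ((d α β : K)) • x (α + β)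
  x_zero : x 0 = 1

namespace QuantumTorus

variable {K : Type} [Field K] {n : ℕ} {T : Type} [Ring T] [Algebra K T]

/-- `α` lies in the central lattice `Γ_Z`, i.e. `x^α` is central in `T_q`. -/
def IsCentral (Q : QuantumTorus K n T) (α : Fin n → ℤ) : Prop :=
  ∀ t : T, Q.x α * t = t * Q.x α

/-- A binomial ideal: a two-sided ideal generated by nonzero elements
`λ x^α + μ x^β`. -/
def IsBinomialIdeal (Q : QuantumTorus K n T) (J : TwoSidedIdeal T) : Prop :=
  ∃ S : Set T,
    (∀ b ∈ S, b ≠ 0 ∧ ∃ (l m : K) (α β : Fin n → ℤ), b = l • Q.x α + m • Q.x β) ∧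
    J = TwoSidedIdeal.span S

/-- The scalars `c : Γ_Z → Kˣ` arising from a fixed algebra isomorphism
`φ : KΓ_Z ≅ Z(T_q)`, `φ(z_γ) = c(γ) x^γ`; the defining property is that
`γ ↦ c(γ) x^γ` is multiplicative on the central lattice and `c 0 = 1`. -/
def IsGoodC (Q : QuantumTorus K n T) (c : (Fin n → ℤ) → Kˣ) : Prop :=
  c 0 = 1 ∧ ∀ α β : Fin n → ℤ, Q.IsCentral α → Q.IsCentral β →
    (((c α : K)) • Q.x α) * (((c β : K)) • Q.x β) = ((c (α + β) : K)) • Q.x (α + β)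

/-- The binomial ideal `I(L,ρ) = ⟨ x^α - c(α)⁻¹ ρ(α) : α ∈ L ⟩`. -/
def binIdeal (Q : QuantumTorus K n T) (c : (Fin n → ℤ) → Kˣ)
    (L : AddSubgroup (Fin n → ℤ)) (ρ : L →+ Additive Kˣ) : TwoSidedIdeal T :=
  TwoSidedIdeal.span
    {t | ∃ α : L, t = Q.x (α : Fin n → ℤ) -
      ((((c (α : Fin n → ℤ))⁻¹ * Additive.toMul (ρ α) : Kˣ) : K)) • (1 : T)}

end QuantumTorus

/-- A (two-sided) prime ideal of a possibly noncommutative ring. -/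
def IsPrimeTSI {R : Type} [Ring R] (P : TwoSidedIdeal R) : Prop :=
  P ≠ ⊤ ∧ ∀ a b : R, (∀ r : R, a * r * b ∈ P) → a ∈ P ∨ b ∈ P

/-- The prime radical of a two-sided ideal: the intersection of the prime
two-sided ideals containing it. -/
def primeRadical {R : Type} [Ring R] (I : TwoSidedIdeal R) : TwoSidedIdeal R :=
  sInf {P : TwoSidedIdeal R | IsPrimeTSI P ∧ I ≤ P}

open scoped TensorProduct

/-- Associated prime of a module over a possibly noncommutative ring: a prime
two-sided ideal `P` such that the module has a nonzero submodule all of whose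
nonzero submodules have annihilator exactly `P` (a fully faithful `R/P`-module). -/
def IsAssocPrimeTSI {R : Type} [Ring R] (M : Type) [AddCommGroup M] [Module R M]
    (P : TwoSidedIdeal R) : Prop :=
  IsPrimeTSI P ∧ ∃ M' : Submodule R M, M' ≠ ⊥ ∧
    ∀ M'' : Submodule R M, M'' ≤ M' → M'' ≠ ⊥ →
      ∀ r : R, r ∈ P ↔ ∀ m ∈ M'', r • m = 0

/-!
Conjugation by a monomial `x^β` multiplies `z x^γ` (`z` central) by the commutation factor
`s(β, γ)`, and the characters `s(·, γ)` separate the cosets of the central lattice `Γ_Z`. Hence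
`T_q` is free over `Z` on the monomials at a transversal of `Γ_Z`, and the coordinates of an
element of a two-sided ideal `I` all lie in `I ∩ Z`. For `m₀ ∈ M₀` with annihilator `P₀` this
gives `t ⊗ m₀ = 0 ↔ t ∈ P`, so `T_q (1 ⊗ m₀) ≅ T_q/P`, which is fully faithful as `P` is prime.
Conversely, an element of `T_q ⊗ M₀ ≅ ⊕ M₀` whose annihilator in `Z` is the prime `P₀` has a
coordinate with annihilator `P₀`.
-/

theorem Submodule.mem_of_sum_mem_of_eigenvectors {K V ι J : Type*} [Field K] [AddCommGroup V]
    [Module K V] (p : Submodule K V) (φ : J → Module.End K V) (hφ : ∀ j, p ≤ p.comap (φ j))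
    (χ : J → ι → K) (hχ : ∀ i i', i ≠ i' → ∃ j, χ j i ≠ χ j i') (s : Finset ι) (f : ι → V)
    (hf : ∀ i ∈ s, ∀ j, φ j (f i) = χ j i • f i) (hs : ∑ i ∈ s, f i ∈ p) :
    ∀ i ∈ s, f i ∈ p := by
  classical
  induction s using Finset.induction_on generalizing f with
  | empty => simp
  | insert w s hw ih =>
    rw [Finset.sum_insert hw] at hs
    have hmem_s : ∀ i ∈ s, f i ∈ p := by
      intro i hi
      obtain ⟨j, hj⟩ := hχ i w (ne_of_mem_of_not_mem hi hw)
      have hkill : (φ j - χ j w • 1) (f w + ∑ i ∈ s, f i) =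
          ∑ i ∈ s, (χ j i - χ j w) • f i := by
        simp only [LinearMap.sub_apply, LinearMap.smul_apply, Module.End.one_apply, map_add,
          map_sum, hf _ (Finset.mem_insert_self w s), sub_smul, Finset.sum_sub_distrib]
        rw [Finset.sum_congr rfl fun i hi => hf i (Finset.mem_insert_of_mem hi) j]
        abel
      have := ih (fun i => (χ j i - χ j w) • f i)
        (fun i hi j' => by rw [map_smul, hf i (Finset.mem_insert_of_mem hi), smul_comm])
        (hkill ▸ p.sub_mem (hφ j hs) (p.smul_mem _ hs)) i hi
      simpa [sub_ne_zero.mpr hj] using p.smul_mem (χ j i - χ j w)⁻¹ this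
    intro i hi
    rcases Finset.mem_insert.mp hi with rfl | hi
    · simpa using p.sub_mem hs (p.sum_mem hmem_s)
    · exact hmem_s i hi

section AssociatedPrimes

variable {R : Type} [Ring R] {M : Type} [AddCommGroup M] [Module R M] {P : TwoSidedIdeal R}

theorem IsAssocPrimeTSI.exists_annihilator_span_singleton (h : IsAssocPrimeTSI M P) :
    ∃ a : M, ∀ r : R, r ∈ P ↔ ∀ s : R, r • s • a = 0 := by
  obtain ⟨-, M', hM', hfaithful⟩ := h
  obtain ⟨a, haM', ha⟩ := (Submodule.ne_bot_iff M').mp hM'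
  refine ⟨a, fun r => (hfaithful _ (Submodule.span_singleton_le_iff_mem a M' |>.mpr haM')
    ((Submodule.span_singleton_eq_bot).not.mpr ha) r).trans ?_⟩
  simp [Submodule.mem_span_singleton]

theorem isAssocPrimeTSI_of_forall_smul_eq_zero_iff (hP : IsPrimeTSI P) {a : M}
    (ha : ∀ t : R, t • a = 0 ↔ t ∈ P) : IsAssocPrimeTSI M P := by
  have ha₀ : a ≠ 0 := fun h => hP.1 (P.one_mem_iff.mp ((ha 1).mp (by rw [h, smul_zero])))
  refine ⟨hP, Submodule.span R {a}, (Submodule.span_singleton_eq_bot).not.mpr ha₀,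
    fun W hW hW₀ r => ⟨fun hr w hw => ?_, fun hr => ?_⟩⟩
  · obtain ⟨t, rfl⟩ := Submodule.mem_span_singleton.mp (hW hw)
    rw [smul_smul, ha]
    exact P.mul_mem_right _ _ hr
  · obtain ⟨w, hw, hw₀⟩ := (Submodule.ne_bot_iff W).mp hW₀
    obtain ⟨t, rfl⟩ := Submodule.mem_span_singleton.mp (hW hw)
    refine (hP.2 r t fun s => ?_).resolve_right fun ht => hw₀ (by rw [(ha t).mpr ht])
    rw [← ha, ← smul_smul, ← smul_smul]
    exact hr _ (W.smul_mem s hw)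

theorem smul_eq_zero_iff_algebraMap_mem {Z : Type} [CommRing Z] [Algebra Z R] [Module Z M]
    [IsScalarTower Z R M] {a : M} (ha : ∀ r : R, r ∈ P ↔ ∀ s : R, r • s • a = 0) (z : Z) :
    z • a = 0 ↔ algebraMap Z R z ∈ P := by
  rw [ha]
  refine ⟨fun h s => ?_, fun h => by simpa using h 1⟩
  rw [← smul_assoc, smul_eq_mul, Algebra.commutes, ← smul_eq_mul, smul_assoc, algebraMap_smul, h,
    smul_zero]

theorem IsPrimeTSI.comap {Z : Type} [CommRing Z] [Algebra Z R] (hP : IsPrimeTSI P)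
    {P₀ : TwoSidedIdeal Z} (hP₀ : ∀ z : Z, z ∈ P₀ ↔ algebraMap Z R z ∈ P) : IsPrimeTSI P₀ := by
  refine ⟨fun h => hP.1 (P.one_mem_iff.mp ?_), fun a b hab => ?_⟩
  · simpa using (hP₀ 1).mp (h ▸ TwoSidedIdeal.mem_top Z)
  · simp only [hP₀]
    refine hP.2 _ _ fun r => ?_
    rw [Algebra.commutes a r, mul_assoc, ← map_mul]
    exact P.mul_mem_left _ _ ((hP₀ _).mp (by simpa using hab 1))

end AssociatedPrimes

section Commutative

variable {Z : Type} [CommRing Z] {M : Type} [AddCommGroup M] [Module Z M] {P₀ : TwoSidedIdeal Z}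

theorem IsPrimeTSI.isPrime_asIdeal (h : IsPrimeTSI P₀) : P₀.asIdeal.IsPrime := by
  refine Ideal.isPrime_iff.mpr ⟨fun htop => h.1 ?_, fun {a b} hab => ?_⟩
  · rw [← P₀.one_mem_iff, ← TwoSidedIdeal.mem_asIdeal, htop]
    trivial
  · simp only [TwoSidedIdeal.mem_asIdeal] at hab ⊢
    exact h.2 a b fun r => by
      rw [mul_right_comm]
      exact P₀.mul_mem_right _ _ hab

theorem isAssocPrimeTSI_iff_exists_forall_smul_eq_zero_iff (hP₀ : IsPrimeTSI P₀) :
    IsAssocPrimeTSI M P₀ ↔ ∃ m : M, ∀ z : Z, z • m = 0 ↔ z ∈ P₀ :=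
  ⟨fun h => h.exists_annihilator_span_singleton.imp fun _ ha =>
      smul_eq_zero_iff_algebraMap_mem ha,
    fun ⟨_, hm⟩ => isAssocPrimeTSI_of_forall_smul_eq_zero_iff hP₀ hm⟩

/-- The product, over the support of `f`, of elements outside `p` killing the respective
coordinates would otherwise lie in `p`. -/
theorem Finsupp.exists_forall_smul_apply_eq_zero_iff {ι : Type} {p : Ideal Z} [p.IsPrime]
    {f : ι →₀ M} (hf : ∀ z : Z, z • f = 0 ↔ z ∈ p) : ∃ i, ∀ z : Z, z • f i = 0 ↔ z ∈ p := by
  classical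
  by_contra! h
  have hp : ∀ i, ∀ z ∈ p, z • f i = 0 := fun i z hz => by
    simpa using congrArg (· i) ((hf z).mpr hz)
  choose g hg using fun i => (h i).imp fun z hz => hz.resolve_right fun h => h.1 (hp i z h.2)
  have : ∏ i ∈ f.support, g i ∈ p := (hf _).mp <| Finsupp.ext fun i => by
    by_cases hi : i ∈ f.support
    · rw [Finsupp.smul_apply, ← Finset.prod_erase_mul _ _ hi, mul_smul, (hg i).1, smul_zero,
        Finsupp.coe_zero, Pi.zero_apply]
    · simp [Finsupp.notMem_support_iff.mp hi]
  obtain ⟨i, -, hi⟩ := Ideal.IsPrime.prod_mem_iff.mp this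
  exact (hg i).2 hi

end Commutative

section TensorProduct

theorem Module.Basis.tmul_eq_zero_iff {Z ι M N : Type} [CommRing Z] [AddCommGroup M] [Module Z M]
    [AddCommGroup N] [Module Z N] (b : Module.Basis ι Z M) (t : M) (m : N) :
    t ⊗ₜ[Z] m = 0 ↔ ∀ i, b.repr t i • m = 0 := by
  classical
  rw [← LinearEquiv.map_eq_zero_iff (TensorProduct.equivFinsuppOfBasisLeft b), Finsupp.ext_iff]
  simp

variable {R Z : Type} [Ring R] [CommRing Z] [Algebra Z R] {M₀ : Type} [AddCommGroup M₀]
  [Module Z M₀] {P : TwoSidedIdeal R} {P₀ : TwoSidedIdeal Z}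

theorem isAssocPrimeTSI_of_annihilator_tensor [Module.Free Z R] (hP₀prime : IsPrimeTSI P₀)
    (hP₀ : ∀ z : Z, z ∈ P₀ ↔ algebraMap Z R z ∈ P) {a : R ⊗[Z] M₀}
    (ha : ∀ r : R, r ∈ P ↔ ∀ s : R, r • s • a = 0) : IsAssocPrimeTSI M₀ P₀ := by
  let E := TensorProduct.equivFinsuppOfBasisLeft (Module.Free.chooseBasis Z R) (N := M₀)
  have hE : ∀ z : Z, z • E a = 0 ↔ z ∈ P₀.asIdeal := fun z => by
    rw [← map_smul, E.map_eq_zero_iff, TwoSidedIdeal.mem_asIdeal, hP₀]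
    exact smul_eq_zero_iff_algebraMap_mem (M := R ⊗[Z] M₀) ha z
  have := hP₀prime.isPrime_asIdeal
  obtain ⟨i, hi⟩ := Finsupp.exists_forall_smul_apply_eq_zero_iff hE
  exact (isAssocPrimeTSI_iff_exists_forall_smul_eq_zero_iff hP₀prime).mpr
    ⟨_, fun z => (hi z).trans TwoSidedIdeal.mem_asIdeal⟩

theorem isAssocPrimeTSI_tensor_of_isAssocPrimeTSI {ι : Type} (b : Module.Basis ι Z R)
    (hP : IsPrimeTSI P) (hb : ∀ t : R, t ∈ P ↔ ∀ i, algebraMap Z R (b.repr t i) ∈ P)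
    (hP₀ : ∀ z : Z, z ∈ P₀ ↔ algebraMap Z R z ∈ P) (h : IsAssocPrimeTSI M₀ P₀) :
    IsAssocPrimeTSI (R ⊗[Z] M₀) P := by
  obtain ⟨m, hm⟩ := (isAssocPrimeTSI_iff_exists_forall_smul_eq_zero_iff h.1).mp h
  refine isAssocPrimeTSI_of_forall_smul_eq_zero_iff hP (a := 1 ⊗ₜ m) fun t => ?_
  rw [TensorProduct.smul_tmul', smul_eq_mul, mul_one, b.tmul_eq_zero_iff, hb]
  simp only [hm, hP₀]

end TensorProduct

namespace QuantumTorus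

variable {K : Type} [Field K] {n : ℕ} {T : Type} [Ring T] [Algebra K T] (Q : QuantumTorus K n T)

lemma d_add_left (α β γ : Fin n → ℤ) : Q.d (α + β) γ = Q.d α γ * Q.d β γ := by
  simp only [Q.d_eq, ← Finset.prod_mul_distrib]
  refine Finset.prod_congr rfl fun i _ => Finset.prod_congr rfl fun j _ => ?_
  split_ifs
  · rw [Pi.add_apply, add_mul, zpow_add]
  · rw [mul_one]

lemma d_add_right (α β γ : Fin n → ℤ) : Q.d α (β + γ) = Q.d α β * Q.d α γ := by
  simp only [Q.d_eq, ← Finset.prod_mul_distrib]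
  refine Finset.prod_congr rfl fun i _ => Finset.prod_congr rfl fun j _ => ?_
  split_ifs
  · rw [Pi.add_apply, mul_add, zpow_add]
  · rw [mul_one]

lemma d_zero_left (β : Fin n → ℤ) : Q.d 0 β = 1 := by
  simp [Q.d_eq]

lemma d_zero_right (α : Fin n → ℤ) : Q.d α 0 = 1 := by
  simp [Q.d_eq]

def commFactor (β γ : Fin n → ℤ) : Kˣ := Q.d β γ * (Q.d γ β)⁻¹

lemma commFactor_add_right (β γ δ : Fin n → ℤ) :
    Q.commFactor β (γ + δ) = Q.commFactor β γ * Q.commFactor β δ := by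
  simp only [commFactor, Q.d_add_left, Q.d_add_right, mul_inv]
  exact mul_mul_mul_comm _ _ _ _

lemma commFactor_zero_right (β : Fin n → ℤ) : Q.commFactor β 0 = 1 := by
  simp [commFactor, Q.d_zero_left, Q.d_zero_right]

lemma x_mul_x_comm (β γ : Fin n → ℤ) :
    Q.x β * Q.x γ = (Q.commFactor β γ : K) • (Q.x γ * Q.x β) := by
  rw [Q.x_mul, Q.x_mul, smul_smul, add_comm γ β, commFactor]
  push_cast
  rw [inv_mul_cancel_right₀ (Units.ne_zero _)]

def xUnit (α : Fin n → ℤ) : Tˣ where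
  val := Q.x α
  inv := (Q.d α α : K) • Q.x (-α)
  val_inv := by
    have h : Q.d α (-α) * Q.d α α = 1 := by rw [← Q.d_add_right, neg_add_cancel, Q.d_zero_right]
    rw [mul_smul_comm, Q.x_mul, add_neg_cancel, Q.x_zero, smul_smul, ← Units.val_mul,
      mul_comm, h, Units.val_one, one_smul]
  inv_val := by
    have h : Q.d α α * Q.d (-α) α = 1 := by rw [← Q.d_add_left, add_neg_cancel, Q.d_zero_left]
    rw [smul_mul_assoc, Q.x_mul, neg_add_cancel, Q.x_zero, smul_smul, ← Units.val_mul, h,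
      Units.val_one, one_smul]

@[simp]
lemma val_xUnit (α : Fin n → ℤ) : (Q.xUnit α : T) = Q.x α := rfl

lemma x_mul_x_mul_inv (β γ : Fin n → ℤ) :
    Q.x β * Q.x γ * ↑(Q.xUnit β)⁻¹ = (Q.commFactor β γ : K) • Q.x γ := by
  rw [Q.x_mul_x_comm, smul_mul_assoc, mul_assoc, ← Q.val_xUnit β, Units.mul_inv, mul_one]

/-- `Γ_Z`: a monomial is central iff it commutes with all monomials. -/
def centralLattice : AddSubgroup (Fin n → ℤ) where
  carrier := {α | ∀ β, Q.commFactor β α = 1}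
  zero_mem' := Q.commFactor_zero_right
  add_mem' ha hb β := by rw [Q.commFactor_add_right, ha β, hb β, one_mul]
  neg_mem' {α} ha β := by
    have h := Q.commFactor_add_right β α (-α)
    rwa [add_neg_cancel, Q.commFactor_zero_right, ha β, one_mul, eq_comm] at h

lemma x_mem_center {α : Fin n → ℤ} (hα : α ∈ Q.centralLattice) :
    Q.x α ∈ Subalgebra.center K T := by
  rw [Subalgebra.mem_center_iff]
  intro t
  have h : LinearMap.mulRight K (Q.x α) = LinearMap.mulLeft K (Q.x α) :=
    Q.basis.ext fun β => by simp [Q.basis_eq, Q.x_mul_x_comm β α, hα β]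
  exact LinearMap.congr_fun h t

lemma exists_commFactor_ne {v w : (Fin n → ℤ) ⧸ Q.centralLattice} (h : v ≠ w) :
    ∃ β, Q.commFactor β v.out ≠ Q.commFactor β w.out := by
  by_contra! hvw
  apply h
  rw [← QuotientAddGroup.out_eq' v, ← QuotientAddGroup.out_eq' w, QuotientAddGroup.eq]
  intro β
  have := Q.commFactor_add_right β v.out (-v.out + w.out)
  rwa [add_neg_cancel_left, ← hvw β, left_eq_mul] at this

variable {Z : Type} [CommRing Z] [Algebra Z T]

lemma algebraMap_mul_x_conj (z : Z) (β γ : Fin n → ℤ) :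
    Q.x β * (algebraMap Z T z * Q.x γ) * ↑(Q.xUnit β)⁻¹ =
      (Q.commFactor β γ : K) • (algebraMap Z T z * Q.x γ) := by
  rw [← mul_assoc, ← Algebra.commutes, mul_assoc, mul_assoc, ← mul_assoc (Q.x β),
    Q.x_mul_x_mul_inv, mul_smul_comm]

/-- Conjugation by `x^β` acts on `z x^γ` by `s(β, γ)`, and these characters separate the cosets
of `Γ_Z`. -/
lemma algebraMap_mem_of_sum_mem (I : TwoSidedIdeal T)
    (s : Finset ((Fin n → ℤ) ⧸ Q.centralLattice)) (g : (Fin n → ℤ) ⧸ Q.centralLattice → Z)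
    (hs : ∑ v ∈ s, algebraMap Z T (g v) * Q.x v.out ∈ I) : ∀ v ∈ s, algebraMap Z T (g v) ∈ I := by
  intro v hv
  have hmem := (I.asIdeal.restrictScalars K).mem_of_sum_mem_of_eigenvectors
    (fun β => LinearMap.mulLeftRight K (Q.x β, ↑(Q.xUnit β)⁻¹))
    (fun β t ht => by simpa using I.mul_mem_right _ _ (I.mul_mem_left _ _ ht))
    (fun β v => (Q.commFactor β v.out : K))
    (fun v w h => (Q.exists_commFactor_ne h).imp fun β hβ hc => hβ (Units.ext hc))
    s (fun v => algebraMap Z T (g v) * Q.x v.out)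
    (fun v _ β => by simpa using Q.algebraMap_mul_x_conj (g v) β v.out) (by simpa using hs) v hv
  have := I.mul_mem_right _ (↑(Q.xUnit v.out)⁻¹) hmem
  rwa [mul_assoc, ← Q.val_xUnit, Units.mul_inv, mul_one] at this

variable (Z)

lemma smul_x_mem_span (hcen : Set.center T ⊆ Set.range (algebraMap Z T)) (c : K)
    (γ : Fin n → ℤ) :
    c • Q.x γ ∈
      Submodule.span Z (Set.range fun v : (Fin n → ℤ) ⧸ Q.centralLattice => Q.x v.out) := by
  set δ := (γ : (Fin n → ℤ) ⧸ Q.centralLattice).out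
  have hδ : -δ + γ ∈ Q.centralLattice := QuotientAddGroup.eq.mp (QuotientAddGroup.out_eq' _)
  have hcentral : (c * (Q.d (-δ + γ) δ : K)⁻¹) • Q.x (-δ + γ) ∈ Set.center T :=
    (Subalgebra.center K T).smul_mem (Q.x_mem_center hδ) _
  obtain ⟨z, hz⟩ := hcen hcentral
  have h : c • Q.x γ = z • Q.x δ := by
    rw [Algebra.smul_def z, hz, smul_mul_assoc, Q.x_mul, show -δ + γ + δ = γ by abel, smul_smul,
      inv_mul_cancel_right₀ (Units.ne_zero _)]
  exact h ▸ Submodule.smul_mem _ z (Submodule.subset_span ⟨_, rfl⟩)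

noncomputable def centerBasis (hinj : Function.Injective (algebraMap Z T))
    (hcen : Set.center T ⊆ Set.range (algebraMap Z T)) :
    Module.Basis ((Fin n → ℤ) ⧸ Q.centralLattice) Z T :=
  Module.Basis.mk (v := fun v => Q.x v.out)
    (linearIndependent_iff'.mpr fun s g hs v hv => hinj <| by
      simpa using Q.algebraMap_mem_of_sum_mem ⊥ s g (by simpa [Algebra.smul_def] using hs) v hv)
    (fun t _ => by
      rw [← Q.basis.linearCombination_repr t, Finsupp.linearCombination_apply]
      exact Submodule.finsuppSum_mem _ _ _ _ fun γ _ => by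
        simpa [Q.basis_eq] using Q.smul_x_mem_span Z hcen _ γ)

variable {Z}

lemma centerBasis_apply (hinj : Function.Injective (algebraMap Z T))
    (hcen : Set.center T ⊆ Set.range (algebraMap Z T)) (v : (Fin n → ℤ) ⧸ Q.centralLattice) :
    Q.centerBasis Z hinj hcen v = Q.x v.out :=
  Module.Basis.mk_apply _ _ v

theorem mem_iff_forall_algebraMap_centerBasis_repr_mem
    (hinj : Function.Injective (algebraMap Z T))
    (hcen : Set.center T ⊆ Set.range (algebraMap Z T)) (I : TwoSidedIdeal T) (t : T) :
    t ∈ I ↔ ∀ v, algebraMap Z T ((Q.centerBasis Z hinj hcen).repr t v) ∈ I := by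
  set b := Q.centerBasis Z hinj hcen
  have ht : t = ∑ v ∈ (b.repr t).support, algebraMap Z T (b.repr t v) * Q.x v.out := by
    conv_lhs => rw [← b.linearCombination_repr t]
    simp [Finsupp.linearCombination_apply, Finsupp.sum, Algebra.smul_def, b, Q.centerBasis_apply]
  constructor
  · intro hI v
    by_cases hv : v ∈ (b.repr t).support
    · exact Q.algebraMap_mem_of_sum_mem I _ _ (ht ▸ hI) v hv
    · simp [Finsupp.notMem_support_iff.mp hv]
  · intro h
    rw [ht]
    exact sum_mem fun v _ => I.mul_mem_right _ _ (h v)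

end QuantumTorus

/-- For a module `M₀` over the center `Z` of the quantum torus `T_q` and
`M = T_q ⊗_Z M₀`, a prime `P` of `T_q` with `P₀ = P ∩ Z`: `P` is an associated
prime of `M` iff `P₀` is an associated prime of `M₀` iff `P` is the annihilator
of a cyclic submodule of `M`. -/
theorem assocPrime_tensor_center {K : Type} [Field K] {n : ℕ} {T : Type} [Ring T]
    [Algebra K T] (Q : QuantumTorus K n T)
    (Z : Type) [CommRing Z] [Algebra Z T]
    (hinj : Function.Injective (algebraMap Z T))
    (hcen : Set.range (algebraMap Z T) = Set.center T)
    (M₀ : Type) [AddCommGroup M₀] [Module Z M₀]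
    (P : TwoSidedIdeal T) (hP : IsPrimeTSI P)
    (P₀ : TwoSidedIdeal Z) (hP₀ : ∀ z : Z, z ∈ P₀ ↔ algebraMap Z T z ∈ P) :
    (IsAssocPrimeTSI (T ⊗[Z] M₀) P ↔ IsAssocPrimeTSI M₀ P₀) ∧
    (IsAssocPrimeTSI (T ⊗[Z] M₀) P ↔
      ∃ a : T ⊗[Z] M₀, ∀ r : T, r ∈ P ↔ ∀ s : T, r • s • a = 0) := by
  have := Module.Free.of_basis (Q.centerBasis Z hinj hcen.ge)
  have hca : (∃ a : T ⊗[Z] M₀, ∀ r : T, r ∈ P ↔ ∀ s : T, r • s • a = 0) →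
      IsAssocPrimeTSI M₀ P₀ :=
    fun ⟨_, ha⟩ => isAssocPrimeTSI_of_annihilator_tensor (hP.comap hP₀) hP₀ ha
  have hba : IsAssocPrimeTSI M₀ P₀ → IsAssocPrimeTSI (T ⊗[Z] M₀) P :=
    isAssocPrimeTSI_tensor_of_isAssocPrimeTSI _ hP
      (Q.mem_iff_forall_algebraMap_centerBasis_repr_mem hinj hcen.ge P) hP₀
  exact ⟨⟨fun h => hca h.exists_annihilator_span_singleton, hba⟩,
    ⟨IsAssocPrimeTSI.exists_annihilator_span_singleton, fun h => hba (hca h)⟩⟩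
end

section
/- Every proper binomial ideal J of the quantum torus T_q has a generating set consisting of elements of the form x^{γ_s} − ν_s with γ_s ∈ Γ_Z and ν_s ∈ K^×; in particular, every generator exponent lies in the central lattice Γ_Z. -/
/-!
The monomials `x^α` are units, so a proper ideal contains no nonzero multiple of one. Hence a
binomial `l x^α + m x^β` in a proper ideal `J` has `l, m ≠ 0`, and it is
`(x^{α-β} - ν) · (l / d(α-β, β)) x^β` with `ν ≠ 0`, a unit multiple of `x^{α-β} - ν ∈ J`.
Such binomials generate `J`, and each such `γ` is central: its commutator with `x^δ` is
`(d(δ,γ) - d(γ,δ)) x^{γ+δ} ∈ J`, which forces `d(γ,δ) = d(δ,γ)` for all `δ`.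
-/

theorem TwoSidedIdeal.eq_top_of_isUnit_mem {R : Type*} [Ring R] (I : TwoSidedIdeal R) {u : R}
    (hu : IsUnit u) (h : u ∈ I) : I = ⊤ := by
  obtain ⟨v, rfl⟩ := hu
  exact I.eq_top (by simpa using I.mul_mem_right _ (↑v⁻¹ : R) h)

namespace QuantumTorus

variable {K : Type} [Field K] {n : ℕ} {T : Type} [Ring T] [Algebra K T] (Q : QuantumTorus K n T)

theorem isUnit_x (α : Fin n → ℤ) : IsUnit (Q.x α) := by
  refine isUnit_iff_exists_and_exists.2
    ⟨⟨((Q.d α (-α) : K))⁻¹ • Q.x (-α), ?_⟩, ⟨((Q.d (-α) α : K))⁻¹ • Q.x (-α), ?_⟩⟩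
  · rw [mul_smul_comm, Q.x_mul, add_neg_cancel, Q.x_zero, smul_smul,
      inv_mul_cancel₀ (Units.ne_zero _), one_smul]
  · rw [smul_mul_assoc, Q.x_mul, neg_add_cancel, Q.x_zero, smul_smul,
      inv_mul_cancel₀ (Units.ne_zero _), one_smul]

theorem isUnit_smul_x {k : K} (hk : k ≠ 0) (α : Fin n → ℤ) : IsUnit (k • Q.x α) :=
  (Q.isUnit_x α).smul (Units.mk0 k hk)

theorem eq_top_of_smul_x_mem {J : TwoSidedIdeal T} {k : K} (hk : k ≠ 0) {α : Fin n → ℤ}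
    (h : k • Q.x α ∈ J) : J = ⊤ :=
  J.eq_top_of_isUnit_mem (Q.isUnit_smul_x hk α) h

theorem isCentral_of_forall_d_eq {γ : Fin n → ℤ} (h : ∀ δ, Q.d γ δ = Q.d δ γ) :
    Q.IsCentral γ := by
  intro t
  have hlin : LinearMap.mulLeft K (Q.x γ) = LinearMap.mulRight K (Q.x γ) := by
    refine Q.basis.ext fun δ => ?_
    simp only [LinearMap.mulLeft_apply, LinearMap.mulRight_apply, Q.basis_eq, Q.x_mul, h δ,
      add_comm]
  exact DFunLike.congr_fun hlin t

theorem commutator_x_sub_smul_one (γ δ : Fin n → ℤ) (ν : K) :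
    Q.x δ * (Q.x γ - ν • 1) - (Q.x γ - ν • 1) * Q.x δ =
      ((Q.d δ γ : K) - Q.d γ δ) • Q.x (γ + δ) := by
  rw [mul_sub, sub_mul, mul_smul_comm, smul_mul_assoc, mul_one, one_mul, Q.x_mul, Q.x_mul,
    add_comm δ γ, sub_smul]
  abel

theorem isCentral_of_sub_smul_one_mem {J : TwoSidedIdeal T} (hJ : J ≠ ⊤) {γ : Fin n → ℤ}
    {ν : K} (h : Q.x γ - ν • 1 ∈ J) : Q.IsCentral γ := by
  refine Q.isCentral_of_forall_d_eq fun δ => ?_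
  by_contra hne
  have hmem := J.sub_mem (J.mul_mem_left (Q.x δ) _ h) (J.mul_mem_right _ (Q.x δ) h)
  rw [commutator_x_sub_smul_one] at hmem
  exact hJ (Q.eq_top_of_smul_x_mem (sub_ne_zero.2 (Units.val_injective.ne (Ne.symm hne))) hmem)

theorem coeffs_ne_zero_of_binomial_mem {J : TwoSidedIdeal T} (hJ : J ≠ ⊤) {l m : K}
    {α β : Fin n → ℤ} (hmem : l • Q.x α + m • Q.x β ∈ J) (hne : l • Q.x α + m • Q.x β ≠ 0) :
    l ≠ 0 ∧ m ≠ 0 := by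
  have left_ne_zero : ∀ {l m : K} {α β : Fin n → ℤ}, l • Q.x α + m • Q.x β ∈ J →
      l • Q.x α + m • Q.x β ≠ 0 → l ≠ 0 := by
    rintro l m α β hmem hne rfl
    rw [zero_smul, zero_add] at hmem hne
    exact hJ (Q.eq_top_of_smul_x_mem (left_ne_zero_of_smul hne) hmem)
  exact ⟨left_ne_zero hmem hne,
    left_ne_zero (add_comm (l • Q.x α) _ ▸ hmem) (add_comm (l • Q.x α) _ ▸ hne)⟩

theorem binomial_eq_sub_smul_one_mul_unit {l m : K} (hl : l ≠ 0) (hm : m ≠ 0) (α β : Fin n → ℤ) :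
    ∃ (ν : Kˣ) (v : Tˣ), l • Q.x α + m • Q.x β = (Q.x (α - β) - (ν : K) • 1) * v := by
  have hc : (Q.d (α - β) β : K) ≠ 0 := Units.ne_zero _
  refine ⟨Units.mk0 (-(m * Q.d (α - β) β / l)) (by simp [hl, hm, hc]),
    (Q.isUnit_smul_x (div_ne_zero hl hc) β).unit, ?_⟩
  simp only [IsUnit.unit_spec, Units.val_mk0, neg_smul, sub_neg_eq_add, add_mul, mul_smul_comm,
    smul_mul_assoc, one_mul, Q.x_mul, sub_add_cancel, smul_add, smul_smul]
  congr 2 <;> field_simp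

end QuantumTorus

/-- Every proper binomial ideal of the quantum torus has a generating set of
binomials `x^γ - ν` with `γ` in the central lattice and `ν ∈ Kˣ`. -/
theorem binomial_ideal_generators {K : Type} [Field K] {n : ℕ} {T : Type} [Ring T]
    [Algebra K T] (Q : QuantumTorus K n T) (J : TwoSidedIdeal T)
    (hJtop : J ≠ ⊤) (hJ : Q.IsBinomialIdeal J) :
    ∃ S : Set T, J = TwoSidedIdeal.span S ∧
      ∀ t ∈ S, ∃ (γ : Fin n → ℤ) (ν : Kˣ),
        Q.IsCentral γ ∧ t = Q.x γ - ((ν : K)) • (1 : T) := by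
  obtain ⟨S, hS, rfl⟩ := hJ
  refine ⟨{g | g ∈ TwoSidedIdeal.span S ∧ ∃ (γ : Fin n → ℤ) (ν : Kˣ),
    Q.IsCentral γ ∧ g = Q.x γ - (ν : K) • 1}, le_antisymm ?_ ?_, fun g hg => hg.2⟩
  · refine TwoSidedIdeal.span_le.2 fun b hb => ?_
    obtain ⟨hb0, l, m, α, β, rfl⟩ := hS b hb
    have hbJ := TwoSidedIdeal.subset_span hb
    obtain ⟨hl, hm⟩ := Q.coeffs_ne_zero_of_binomial_mem hJtop hbJ hb0
    obtain ⟨ν, v, hfac⟩ := Q.binomial_eq_sub_smul_one_mul_unit hl hm α β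
    have hgJ : Q.x (α - β) - (ν : K) • 1 ∈ TwoSidedIdeal.span S := by
      simpa [hfac] using (TwoSidedIdeal.span S).mul_mem_right _ (↑v⁻¹ : T) hbJ
    rw [SetLike.mem_coe, hfac]
    exact TwoSidedIdeal.mul_mem_right _ _ _ (TwoSidedIdeal.subset_span
      ⟨hgJ, α - β, ν, Q.isCentral_of_sub_smul_one_mem hJtop hgJ, rfl⟩)
  · exact TwoSidedIdeal.span_le.2 fun g hg => hg.1
end

section
/- If J is a proper binomial ideal of the quantum torus T_q, then L = {α ∈ ℤ^n | x^α ∈ K^× + J} is a sublattice of Γ_Z, and there is a unique group homomorphism ρ : L → K^× such that J = I(L,ρ) = ⟨x^α − c(α)^{-1}ρ(α) | α ∈ L⟩. -/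
/-!
The set `L` of exponents `α` with `x^α ≡ λ (mod J)` for a unit `λ` is closed under sums and
negatives because monomials multiply to scalar multiples of monomials, and `λ` is determined by
`α` because the proper ideal `J` contains no nonzero scalar. Each such `x^α` is central: its
commutator with `x^β` is a scalar multiple of the unit `x^{α+β}` lying in `J`. After
multiplication by the unit `x^{-β}`, a binomial generator `l x^α + m x^β` of `J` becomes
`u x^{α-β} + v`, which lies in `J` only if `u = v = 0` or `α - β ∈ L` with `λ(α - β) = -v/u`;
either way it lies in `I(L, ρ)` for `ρ(α) = c(α) λ(α)`, and `ρ` is multiplicative by the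
cocycle identities satisfied by `c` and `λ`.
-/

namespace TwoSidedIdeal

variable {K R : Type*} [Ring R] (I : TwoSidedIdeal R)

theorem algebra_smul_mem [CommSemiring K] [Algebra K R] (k : K) {t : R} (ht : t ∈ I) :
    k • t ∈ I := by
  rw [Algebra.smul_def]
  exact I.mul_mem_left _ _ ht

variable [Field K] [Algebra K R]

theorem algebra_smul_mem_iff {k : K} (hk : k ≠ 0) {t : R} : k • t ∈ I ↔ t ∈ I :=
  ⟨fun h => by simpa [smul_smul, inv_mul_cancel₀ hk] using I.algebra_smul_mem k⁻¹ h,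
    I.algebra_smul_mem k⟩

theorem smul_sub_smul_one_mem_iff {u : K} (hu : u ≠ 0) {a : K} {t : R} :
    u • t - a • 1 ∈ I ↔ t - (u⁻¹ * a) • 1 ∈ I := by
  rw [← I.algebra_smul_mem_iff hu (t := t - _), smul_sub, smul_smul, mul_inv_cancel_left₀ hu]

theorem smul_one_mem_iff (hI : I ≠ ⊤) {k : K} : k • (1 : R) ∈ I ↔ k = 0 := by
  refine ⟨fun h => ?_, fun h => by simp [h, I.zero_mem]⟩
  by_contra hk
  exact hI (I.eq_top ((I.algebra_smul_mem_iff hk).1 h))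

theorem smul_one_eq_of_sub_mem (hI : I ≠ ⊤) {t : R} {a b : K} (ha : t - a • 1 ∈ I)
    (hb : t - b • 1 ∈ I) : a = b := by
  have h : (b - a) • (1 : R) ∈ I := by
    convert I.sub_mem ha hb using 1
    rw [sub_smul]
    abel
  exact (sub_eq_zero.1 ((I.smul_one_mem_iff hI).1 h)).symm

end TwoSidedIdeal

namespace QuantumTorus

variable {K : Type} [Field K] {n : ℕ} {T : Type} [Ring T] [Algebra K T]
variable (Q : QuantumTorus K n T)

theorem x_ne_zero (α : Fin n → ℤ) : Q.x α ≠ 0 := Q.basis_eq α ▸ Q.basis.ne_zero α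

theorem smul_x_injective (α : Fin n → ℤ) : Function.Injective fun k : K => k • Q.x α :=
  smul_left_injective K (Q.x_ne_zero α)

theorem mul_x_mul_x_neg (t : T) (γ : Fin n → ℤ) :
    t * Q.x γ * Q.x (-γ) = (Q.d γ (-γ) : K) • t := by
  rw [mul_assoc, Q.x_mul, add_neg_cancel, Q.x_zero, mul_smul_comm, mul_one]

theorem mul_x_mem_iff (I : TwoSidedIdeal T) (t : T) (γ : Fin n → ℤ) :
    t * Q.x γ ∈ I ↔ t ∈ I := by
  refine ⟨fun h => ?_, fun h => I.mul_mem_right _ _ h⟩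
  have h' := I.mul_mem_right _ (Q.x (-γ)) h
  rwa [Q.mul_x_mul_x_neg, I.algebra_smul_mem_iff (Units.ne_zero _)] at h'

variable {Q}

theorem smul_x_mem_iff {J : TwoSidedIdeal T} (hJ : J ≠ ⊤) {k : K} {α : Fin n → ℤ} :
    k • Q.x α ∈ J ↔ k = 0 := by
  rw [← one_mul (Q.x α), ← smul_mul_assoc, Q.mul_x_mem_iff, J.smul_one_mem_iff hJ]

theorem isCentral_of_d_comm {α : Fin n → ℤ} (h : ∀ β, Q.d α β = Q.d β α) : Q.IsCentral α := by
  have key : LinearMap.mulLeft K (Q.x α) = LinearMap.mulRight K (Q.x α) := by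
    refine Q.basis.ext fun β => ?_
    rw [LinearMap.mulLeft_apply, LinearMap.mulRight_apply, Q.basis_eq, Q.x_mul, Q.x_mul, h β,
      add_comm]
  exact fun t => LinearMap.congr_fun key t

theorem c_add {c : (Fin n → ℤ) → Kˣ} (hc : Q.IsGoodC c) {α β : Fin n → ℤ}
    (hα : Q.IsCentral α) (hβ : Q.IsCentral β) : c (α + β) = c α * c β * Q.d α β := by
  have h := hc.2 α β hα hβ
  rw [smul_mul_assoc, mul_smul_comm, Q.x_mul, smul_smul, smul_smul] at h
  exact Units.ext (by simpa using (Q.smul_x_injective _ h).symm)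

section Lattice

variable {J : TwoSidedIdeal T}

theorem x_add_sub_mem {α β : Fin n → ℤ} {a b : Kˣ} (ha : Q.x α - (a : K) • 1 ∈ J)
    (hb : Q.x β - (b : K) • 1 ∈ J) :
    Q.x (α + β) - (((Q.d α β)⁻¹ * (a * b) : Kˣ) : K) • 1 ∈ J := by
  have h : (Q.d α β : K) • Q.x (α + β) - (a * b : K) • 1 ∈ J := by
    convert J.add_mem (J.mul_mem_right _ (Q.x β) ha) (J.algebra_smul_mem (a : K) hb) using 1
    rw [sub_mul, smul_mul_assoc, one_mul, Q.x_mul, smul_sub, smul_smul]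
    abel
  simpa using (J.smul_sub_smul_one_mem_iff (Units.ne_zero _)).1 h

theorem x_neg_sub_mem {α : Fin n → ℤ} {a : Kˣ} (ha : Q.x α - (a : K) • 1 ∈ J) :
    Q.x (-α) - ((a⁻¹ * Q.d α (-α) : Kˣ) : K) • 1 ∈ J := by
  have h : (a : K) • Q.x (-α) - (Q.d α (-α) : K) • 1 ∈ J := by
    convert J.neg_mem (J.mul_mem_right _ (Q.x (-α)) ha) using 1
    rw [sub_mul, smul_mul_assoc, one_mul, Q.x_mul, add_neg_cancel, Q.x_zero]
    abel
  simpa using (J.smul_sub_smul_one_mem_iff (Units.ne_zero _)).1 h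

variable (Q J) in
def lattice : AddSubgroup (Fin n → ℤ) where
  carrier := {α | ∃ lam : Kˣ, Q.x α - (lam : K) • (1 : T) ∈ J}
  zero_mem' := ⟨1, by simp [Q.x_zero]⟩
  add_mem' := fun ⟨_, ha⟩ ⟨_, hb⟩ => ⟨_, Q.x_add_sub_mem ha hb⟩
  neg_mem' := fun ⟨_, ha⟩ => ⟨_, Q.x_neg_sub_mem ha⟩

theorem d_comm_of_x_sub_mem (hJ : J ≠ ⊤) {α : Fin n → ℤ} {a : K}
    (h : Q.x α - a • 1 ∈ J) (β : Fin n → ℤ) : Q.d α β = Q.d β α := by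
  have hcomm : ((Q.d β α : K) - Q.d α β) • Q.x (α + β) ∈ J := by
    convert J.sub_mem (J.mul_mem_left (Q.x β) _ h) (J.mul_mem_right _ (Q.x β) h) using 1
    rw [mul_sub, sub_mul, Q.x_mul, Q.x_mul, mul_smul_comm, mul_one, smul_mul_assoc, one_mul,
      sub_smul, add_comm β α]
    abel
  exact (Units.ext (sub_eq_zero.1 ((smul_x_mem_iff hJ).1 hcomm))).symm

theorem isCentral_of_mem_lattice (hJ : J ≠ ⊤) {α : Fin n → ℤ} (hα : α ∈ Q.lattice J) :
    Q.IsCentral α :=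
  let ⟨_, h⟩ := hα
  isCentral_of_d_comm (Q.d_comm_of_x_sub_mem hJ h)

noncomputable def latticeUnit (α : Q.lattice J) : Kˣ := α.2.choose

theorem x_sub_latticeUnit_mem (α : Q.lattice J) :
    Q.x (α : Fin n → ℤ) - (Q.latticeUnit α : K) • 1 ∈ J :=
  α.2.choose_spec

theorem latticeUnit_eq (hJ : J ≠ ⊤) {α : Q.lattice J} {a : Kˣ}
    (h : Q.x (α : Fin n → ℤ) - (a : K) • 1 ∈ J) : Q.latticeUnit α = a :=
  Units.ext (J.smul_one_eq_of_sub_mem hJ (Q.x_sub_latticeUnit_mem α) h)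

theorem latticeUnit_add (hJ : J ≠ ⊤) (α β : Q.lattice J) :
    Q.latticeUnit (α + β) =
      (Q.d α β)⁻¹ * (Q.latticeUnit α * Q.latticeUnit β) :=
  Q.latticeUnit_eq hJ (Q.x_add_sub_mem (Q.x_sub_latticeUnit_mem α) (Q.x_sub_latticeUnit_mem β))

variable {c : (Fin n → ℤ) → Kˣ}

noncomputable def character (hc : Q.IsGoodC c) (hJ : J ≠ ⊤) : Q.lattice J →+ Additive Kˣ :=
  AddMonoidHom.mk' (fun α => Additive.ofMul (c α * Q.latticeUnit α)) fun α β => by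
    rw [← ofMul_mul, AddSubgroup.coe_add, Q.latticeUnit_add hJ,
      c_add hc (Q.isCentral_of_mem_lattice hJ α.2) (Q.isCentral_of_mem_lattice hJ β.2),
      mul_assoc (c α * c β), mul_inv_cancel_left, mul_mul_mul_comm]

theorem inv_c_mul_character (hc : Q.IsGoodC c) (hJ : J ≠ ⊤) (α : Q.lattice J) :
    (c α)⁻¹ * Additive.toMul (Q.character hc hJ α) = Q.latticeUnit α :=
  inv_mul_cancel_left _ _

theorem x_sub_latticeUnit_mem_binIdeal (hc : Q.IsGoodC c) (hJ : J ≠ ⊤) (α : Q.lattice J) :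
    Q.x (α : Fin n → ℤ) - (Q.latticeUnit α : K) • 1 ∈
      Q.binIdeal c (Q.lattice J) (Q.character hc hJ) :=
  TwoSidedIdeal.subset_span ⟨α, by rw [inv_c_mul_character]⟩

theorem binIdeal_character_le (hc : Q.IsGoodC c) (hJ : J ≠ ⊤) :
    Q.binIdeal c (Q.lattice J) (Q.character hc hJ) ≤ J := by
  refine TwoSidedIdeal.span_le.2 ?_
  rintro _ ⟨α, rfl⟩
  rw [inv_c_mul_character]
  exact Q.x_sub_latticeUnit_mem α

theorem smul_x_add_smul_one_mem_binIdeal (hc : Q.IsGoodC c) (hJ : J ≠ ⊤) {u v : K}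
    {γ : Fin n → ℤ} (h : u • Q.x γ + v • 1 ∈ J) :
    u • Q.x γ + v • 1 ∈ Q.binIdeal c (Q.lattice J) (Q.character hc hJ) := by
  by_cases hu : u = 0
  · rw [hu, zero_smul, zero_add] at h ⊢
    rw [(J.smul_one_mem_iff hJ).1 h, zero_smul]
    exact TwoSidedIdeal.zero_mem _
  by_cases hv : v = 0
  · rw [hv, zero_smul, add_zero] at h
    exact absurd ((smul_x_mem_iff hJ).1 h) hu
  let w : Kˣ := Units.mk0 (-(u⁻¹ * v)) (by simp [hu, hv])
  have hfactor : u • Q.x γ + v • 1 = u • (Q.x γ - (w : K) • 1) := by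
    rw [Units.val_mk0, smul_sub, smul_smul, mul_neg, neg_smul, sub_neg_eq_add,
      mul_inv_cancel_left₀ hu]
  have hγ : Q.x γ - (w : K) • 1 ∈ J := (J.algebra_smul_mem_iff hu).1 (hfactor ▸ h)
  have hunit : Q.latticeUnit ⟨γ, _, hγ⟩ = w := Q.latticeUnit_eq hJ hγ
  rw [hfactor, ← hunit]
  exact TwoSidedIdeal.algebra_smul_mem _ u (Q.x_sub_latticeUnit_mem_binIdeal hc hJ ⟨γ, _, hγ⟩)

theorem le_binIdeal_character (hc : Q.IsGoodC c) (hJ : J ≠ ⊤) (hJb : Q.IsBinomialIdeal J) :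
    J ≤ Q.binIdeal c (Q.lattice J) (Q.character hc hJ) := by
  obtain ⟨S, hS, rfl⟩ := hJb
  refine TwoSidedIdeal.span_le.2 fun b hb => ?_
  obtain ⟨-, l, m, α, β, rfl⟩ := hS b hb
  have hshift : (l • Q.x α + m • Q.x β) * Q.x (-β) =
      (l * Q.d α (-β)) • Q.x (α - β) + (m * Q.d β (-β)) • 1 := by
    rw [add_mul, smul_mul_assoc, smul_mul_assoc, Q.x_mul, Q.x_mul, add_neg_cancel, Q.x_zero,
      smul_smul, smul_smul, ← sub_eq_add_neg]
  rw [SetLike.mem_coe, ← Q.mul_x_mem_iff _ _ (-β), hshift]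
  refine smul_x_add_smul_one_mem_binIdeal hc _ ?_
  rw [← hshift, Q.mul_x_mem_iff]
  exact TwoSidedIdeal.subset_span hb

theorem eq_character_of_eq_binIdeal (hc : Q.IsGoodC c) (hJ : J ≠ ⊤)
    {ρ : Q.lattice J →+ Additive Kˣ} (hρ : J = Q.binIdeal c (Q.lattice J) ρ) :
    ρ = Q.character hc hJ := by
  refine AddMonoidHom.ext fun α => Additive.toMul.injective ?_
  have h := Q.latticeUnit_eq hJ (hρ.ge (TwoSidedIdeal.subset_span ⟨α, rfl⟩))
  rwa [← inv_c_mul_character hc hJ, mul_right_inj, eq_comm] at h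

end Lattice

end QuantumTorus

/-- If `J` is a proper binomial ideal of `T_q`, then
`L = {α : x^α ∈ Kˣ + J}` is a sublattice of the central lattice `Γ_Z` and
there is a unique `ρ ∈ Hom(L, Kˣ)` with `J = I(L,ρ)`. -/
theorem proper_binomial_eq_binIdeal {K : Type} [Field K] {n : ℕ} {T : Type} [Ring T]
    [Algebra K T] (Q : QuantumTorus K n T) (c : (Fin n → ℤ) → Kˣ) (hc : Q.IsGoodC c)
    (J : TwoSidedIdeal T) (hJtop : J ≠ ⊤) (hJ : Q.IsBinomialIdeal J) :
    ∃ L : AddSubgroup (Fin n → ℤ),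
      (L : Set (Fin n → ℤ)) = {α | ∃ lam : Kˣ, Q.x α - ((lam : K)) • (1 : T) ∈ J} ∧
      (∀ α ∈ L, Q.IsCentral α) ∧
      ∃! ρ : L →+ Additive Kˣ, J = Q.binIdeal c L ρ :=
  ⟨Q.lattice J, rfl, fun _ => Q.isCentral_of_mem_lattice hJtop, Q.character hc hJtop,
    le_antisymm (Q.le_binIdeal_character hc hJtop hJ) (Q.binIdeal_character_le hc hJtop),
    fun _ => Q.eq_character_of_eq_binIdeal hc hJtop⟩
end

section
/- For a sublattice L of Γ_Z and ρ ∈ Hom(L,K^×), the quotient T_q/I(L,ρ) is a twisted group algebra of ℤ^n/L over K, with K-basis (x^σ + I(L,ρ) | σ ∈ S) for any transversal S of L in ℤ^n. -/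
open Submodule QuotientAddGroup

theorem TwoSidedIdeal.smul_mem_of_mem {K A : Type*} [CommSemiring K] [Ring A] [Algebra K A]
    {I : TwoSidedIdeal A} (k : K) {t : A} (ht : t ∈ I) : k • t ∈ I := by
  rw [Algebra.smul_def]
  exact I.mul_mem_left _ _ ht

section TransversalBasis

variable {K G A : Type*} [CommRing K] [AddCommGroup G] [Ring A] [Algebra K A] {L : AddSubgroup G}

noncomputable def transversalProjection (v : Module.Basis G K A) (σ : G ⧸ L → G) : A →ₗ[K] A :=
  v.constr K fun β => v (σ β)

variable {σ : G ⧸ L → G}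

theorem sub_transversal_mem (hσ : ∀ g, (σ g : G ⧸ L) = g) (β : G) : β - σ β ∈ L :=
  eq_iff_sub_mem.mp (hσ β).symm

variable {v : Module.Basis G K A} {y : AddChar L A}

theorem transversalProjection_basis (β : G) :
    transversalProjection v σ (v β) = v (σ β) :=
  v.constr_basis K _ β

theorem transversalProjection_mul_addChar (hv : ∀ β (a : L), v (β + a) = v β * y a)
    (a : L) (t : A) : transversalProjection v σ (t * y a) = transversalProjection v σ t := by
  have h : transversalProjection v σ ∘ₗ LinearMap.mulRight K (y a) = transversalProjection v σ :=
    v.ext fun β => by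
      simp only [LinearMap.comp_apply, LinearMap.mulRight_apply, ← hv,
        transversalProjection_basis, mk_add_of_mem β a.2]
  exact LinearMap.congr_fun h t

theorem transversalProjection_eq_zero_of_mem_span (hv : ∀ β (a : L), v (β + a) = v β * y a)
    (hy_comm : ∀ a t, Commute (y a) t) {t : A} (ht : t ∈ TwoSidedIdeal.span (Set.range (y · - 1))) :
    transversalProjection v σ t = 0 := by
  rw [TwoSidedIdeal.mem_span_iff_mem_addSubgroup_closure] at ht
  refine (AddSubgroup.closure_le (transversalProjection v σ).toAddMonoidHom.ker).mpr ?_ ht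
  rintro _ ⟨_, ⟨r, -, _, ⟨a, rfl⟩, rfl⟩, r', -, rfl⟩
  change transversalProjection v σ (r * (y a - 1) * r') = 0
  rw [mul_assoc, ((hy_comm a r').sub_left (Commute.one_left r')).eq, ← mul_assoc, mul_sub,
    mul_one, map_sub, transversalProjection_mul_addChar hv, sub_self]

theorem transversalProjection_transversal (hσ : ∀ g, (σ g : G ⧸ L) = g) (g : G ⧸ L) :
    transversalProjection v σ (v (σ g)) = v (σ g) := by
  rw [transversalProjection_basis, hσ]

variable {R : Type*} [Ring R] [Algebra K R] {ψ : A →ₐ[K] R}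

theorem map_basis_eq_transversal (hσ : ∀ g, (σ g : G ⧸ L) = g)
    (hv : ∀ β (a : L), v (β + a) = v β * y a) (hψy : ∀ a, ψ (y a) = 1) (β : G) :
    ψ (v β) = ψ (v (σ β)) := by
  have h := hv (σ β) ⟨β - σ β, sub_transversal_mem hσ β⟩
  rw [add_sub_cancel] at h
  rw [h, map_mul, hψy, mul_one]

theorem linearIndependent_map_transversal (hσ : ∀ g, (σ g : G ⧸ L) = g)
    (hv : ∀ β (a : L), v (β + a) = v β * y a) (hy_comm : ∀ a t, Commute (y a) t)
    (hker : ∀ t, ψ t = 0 → t ∈ TwoSidedIdeal.span (Set.range (y · - 1))) :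
    LinearIndependent K fun g => ψ (v (σ g)) := by
  refine (v.linearIndependent.comp σ (Function.LeftInverse.injective hσ)).map (f := ψ.toLinearMap) ?_
  rw [Submodule.disjoint_def]
  intro t ht hψt
  have hfix : span K (Set.range (v ∘ σ)) ≤ LinearMap.eqLocus (transversalProjection v σ) .id :=
    span_le.mpr <| by
      rintro _ ⟨g, rfl⟩
      exact transversalProjection_transversal hσ g
  have hPt : transversalProjection v σ t = t := hfix ht
  rw [← hPt]
  exact transversalProjection_eq_zero_of_mem_span hv hy_comm (hker t hψt)

theorem top_le_span_map_transversal (hσ : ∀ g, (σ g : G ⧸ L) = g)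
    (hv : ∀ β (a : L), v (β + a) = v β * y a) (hψy : ∀ a, ψ (y a) = 1)
    (hsurj : Function.Surjective ψ) :
    ⊤ ≤ span K (Set.range fun g => ψ (v (σ g))) :=
  calc ⊤ = (⊤ : Submodule K A).map ψ.toLinearMap := by
        rw [Submodule.map_top, LinearMap.range_eq_top.mpr hsurj]
    _ = span K (ψ '' Set.range v) := by rw [← v.span_eq, Submodule.map_span]; rfl
    _ ≤ _ := span_le.mpr <| by
        rintro _ ⟨_, ⟨β, rfl⟩, rfl⟩
        rw [SetLike.mem_coe, map_basis_eq_transversal hσ hv hψy]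
        exact subset_span ⟨_, rfl⟩

end TransversalBasis

section TwistedGroupAlgebra

variable {K G A R : Type*} [CommRing K] [AddCommGroup G] [Ring A] [Algebra K A] [Ring R]
  [Algebra K R] {L : AddSubgroup G} {b : Module.Basis G K A} {y : AddChar L A} {σ : G ⧸ L → G}

theorem exists_rescaled_basis_addChar_translates (hb : ∀ α β, ∃ k : Kˣ, b α * b β = (k : K) • b (α + β))
    (hy : ∀ a, ∃ k : Kˣ, y a = (k : K) • b a) (hσ : ∀ g, (σ g : G ⧸ L) = g) :
    ∃ v : Module.Basis G K A, (∀ β, ∃ k : Kˣ, b β = (k : K) • v β) ∧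
      (∀ g, v (σ g) = b (σ g)) ∧ ∀ β (a : L), v (β + a) = v β * y a := by
  let r : G → L := fun β => ⟨β - σ β, sub_transversal_mem hσ β⟩
  have hw : ∀ β : G, ∃ k : Kˣ, b (σ β) * y (r β) = (k : K) • b β := by
    intro β
    obtain ⟨k, hk⟩ := hy (r β)
    obtain ⟨k', hk'⟩ := hb (σ β) (r β)
    refine ⟨k * k', ?_⟩
    rw [hk, mul_smul_comm, hk', smul_smul, add_sub_cancel, Units.val_mul]
  choose w hw using hw
  have hv : ∀ (β : G) (a : L), (a : G) = β - σ β → b.unitsSMul w β = b (σ β) * y a := by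
    intro β a ha
    rw [b.unitsSMul_apply, Units.smul_def, ← hw]
    exact congrArg (b (σ β) * y ·) (Subtype.ext ha.symm)
  refine ⟨b.unitsSMul w, fun β => ⟨(w β)⁻¹, ?_⟩, fun g => ?_, fun β a => ?_⟩
  · rw [b.unitsSMul_apply, Units.smul_def, smul_smul, ← Units.val_mul, inv_mul_cancel,
      Units.val_one, one_smul]
  · rw [hv (σ g) 0 (by rw [hσ, sub_self, ZeroMemClass.coe_zero]), AddChar.map_zero_eq_one,
      mul_one, hσ]
  · have hshift : ((r β + a : L) : G) = β + a - σ (β + a : G) := by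
      rw [mk_add_of_mem β a.2]
      simp only [r, AddSubgroup.coe_add]
      abel
    rw [hv _ _ hshift, hv β (r β) rfl, AddChar.map_add_eq_mul, mk_add_of_mem β a.2, mul_assoc]

variable {ψ : A →ₐ[K] R}

theorem exists_basis_map_transversal_twisted (hb : ∀ α β, ∃ k : Kˣ, b α * b β = (k : K) • b (α + β))
    (hy : ∀ a, ∃ k : Kˣ, y a = (k : K) • b a) (hy_comm : ∀ a t, Commute (y a) t)
    (hσ : ∀ g, (σ g : G ⧸ L) = g) (hsurj : Function.Surjective ψ) (hψy : ∀ a, ψ (y a) = 1)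
    (hker : ∀ t, ψ t = 0 → t ∈ TwoSidedIdeal.span (Set.range (y · - 1))) :
    (∃ bas : Module.Basis (G ⧸ L) K R, ∀ g, bas g = ψ (b (σ g))) ∧
      ∀ g h, ∃ k : Kˣ, ψ (b (σ g)) * ψ (b (σ h)) = (k : K) • ψ (b (σ (g + h))) := by
  obtain ⟨v, hbv, hvσ, hv⟩ := exists_rescaled_basis_addChar_translates hb hy hσ
  refine ⟨⟨.mk (linearIndependent_map_transversal hσ hv hy_comm hker)
    (top_le_span_map_transversal hσ hv hψy hsurj), fun g => by rw [Module.Basis.mk_apply, hvσ]⟩,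
    fun g h => ?_⟩
  obtain ⟨k, hk⟩ := hb (σ g) (σ h)
  obtain ⟨k', hk'⟩ := hbv (σ g + σ h)
  refine ⟨k * k', ?_⟩
  rw [← map_mul, hk, hk', map_smul, map_smul, map_basis_eq_transversal hσ hv hψy, hvσ,
    QuotientAddGroup.mk_add, hσ, hσ, smul_smul, Units.val_mul]

end TwistedGroupAlgebra

namespace QuantumTorus

variable {K : Type} [Field K] {n : ℕ} {T : Type} [Ring T] [Algebra K T] (Q : QuantumTorus K n T)
  {c : (Fin n → ℤ) → Kˣ} (hc : Q.IsGoodC c) {L : AddSubgroup (Fin n → ℤ)}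
  (hL : ∀ α ∈ L, Q.IsCentral α) (ρ : L →+ Additive Kˣ)

noncomputable def latticeChar : AddChar L T where
  toFun a := ((c a * (Additive.toMul (ρ a))⁻¹ : Kˣ) : K) • Q.x a
  map_zero_eq_one' := by simp [hc.1, Q.x_zero]
  map_add_eq_mul' a a' := by
    have hρ : Additive.toMul (ρ (a + a')) = Additive.toMul (ρ a) * Additive.toMul (ρ a') := by
      rw [map_add, toMul_add]
    calc ((c (a + a') * (Additive.toMul (ρ (a + a')))⁻¹ : Kˣ) : K) • Q.x (a + a')
        = (((Additive.toMul (ρ a))⁻¹ * (Additive.toMul (ρ a'))⁻¹ : Kˣ) : K) •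
            ((c (a + a') : K) • Q.x (a + a')) := by
          rw [smul_smul, hρ]
          congr 1
          simp only [Units.val_mul, Units.val_inv_eq_inv_val, mul_inv]
          ring
      _ = (((Additive.toMul (ρ a))⁻¹ * (Additive.toMul (ρ a'))⁻¹ : Kˣ) : K) •
            (((c a : K) • Q.x a) * ((c a' : K) • Q.x a')) := by
          rw [hc.2 a a' (hL a a.2) (hL a' a'.2)]
      _ = _ := by
          rw [smul_mul_smul_comm, smul_mul_smul_comm, smul_smul]
          congr 1
          simp only [Units.val_mul, Units.val_inv_eq_inv_val]
          ring

theorem latticeChar_apply (a : L) :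
    Q.latticeChar hc hL ρ a = ((c a * (Additive.toMul (ρ a))⁻¹ : Kˣ) : K) • Q.x a :=
  rfl

theorem commute_latticeChar (a : L) (t : T) : Commute (Q.latticeChar hc hL ρ a) t :=
  Commute.smul_left (hL a a.2 t) _

theorem binIdeal_generator_eq_smul (a : L) :
    Q.x a - (((c a)⁻¹ * Additive.toMul (ρ a) : Kˣ) : K) • (1 : T) =
      (((c a)⁻¹ * Additive.toMul (ρ a) : Kˣ) : K) • (Q.latticeChar hc hL ρ a - 1) := by
  have hu : (c a)⁻¹ * Additive.toMul (ρ a) * (c a * (Additive.toMul (ρ a))⁻¹) = 1 := by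
    rw [mul_mul_mul_comm, inv_mul_cancel, mul_inv_cancel, one_mul]
  rw [latticeChar_apply, smul_sub, smul_smul, ← Units.val_mul, hu, Units.val_one, one_smul]

theorem binIdeal_eq_span_latticeChar :
    Q.binIdeal c L ρ = TwoSidedIdeal.span (Set.range (Q.latticeChar hc hL ρ · - 1)) := by
  rw [binIdeal]
  apply le_antisymm <;> rw [TwoSidedIdeal.span_le] <;> rintro _ ⟨a, rfl⟩
  · rw [binIdeal_generator_eq_smul Q hc hL]
    exact TwoSidedIdeal.smul_mem_of_mem _ (TwoSidedIdeal.subset_span ⟨a, rfl⟩)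
  · dsimp only
    rw [← inv_smul_smul₀ (Units.ne_zero ((c a)⁻¹ * Additive.toMul (ρ a)))
      (Q.latticeChar hc hL ρ a - 1), ← binIdeal_generator_eq_smul]
    exact TwoSidedIdeal.smul_mem_of_mem _ (TwoSidedIdeal.subset_span ⟨a, rfl⟩)

end QuantumTorus

/-- `T_q/I(L,ρ)` is a twisted group algebra of `ℤⁿ/L` over `K`, with `K`-basis
the cosets `x^σ + I(L,ρ)` for any transversal (section) `σ` of `L` in `ℤⁿ`.
The quotient is represented by any surjective algebra map `ψ` with kernel `I(L,ρ)`. -/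
theorem quotient_binIdeal_twisted_group_algebra {K : Type} [Field K] {n : ℕ}
    {T : Type} [Ring T] [Algebra K T] (Q : QuantumTorus K n T)
    (c : (Fin n → ℤ) → Kˣ) (hc : Q.IsGoodC c)
    (L : AddSubgroup (Fin n → ℤ)) (hL : ∀ α ∈ L, Q.IsCentral α)
    (ρ : L →+ Additive Kˣ)
    (R : Type) [Ring R] [Algebra K R] (ψ : T →ₐ[K] R)
    (hsurj : Function.Surjective ψ)
    (hker : ∀ t : T, ψ t = 0 ↔ t ∈ Q.binIdeal c L ρ)
    (σ : ((Fin n → ℤ) ⧸ L) → (Fin n → ℤ))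
    (hσ : ∀ g : (Fin n → ℤ) ⧸ L, QuotientAddGroup.mk (σ g) = g) :
    (∃ bas : Module.Basis ((Fin n → ℤ) ⧸ L) K R, ∀ g, bas g = ψ (Q.x (σ g))) ∧
    ∃ e : ((Fin n → ℤ) ⧸ L) → ((Fin n → ℤ) ⧸ L) → Kˣ,
      ∀ g h, ψ (Q.x (σ g)) * ψ (Q.x (σ h)) = ((e g h : K)) • ψ (Q.x (σ (g + h))) := by
  have hker' : ∀ t, ψ t = 0 ↔ t ∈ TwoSidedIdeal.span (Set.range (Q.latticeChar hc hL ρ · - 1)) :=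
    by rwa [← Q.binIdeal_eq_span_latticeChar hc hL]
  have hψy : ∀ a, ψ (Q.latticeChar hc hL ρ a) = 1 := fun a => by
    rw [← sub_eq_zero, ← map_one ψ, ← map_sub, hker']
    exact TwoSidedIdeal.subset_span ⟨a, rfl⟩
  have hb : ∀ α β, ∃ k : Kˣ, Q.basis α * Q.basis β = (k : K) • Q.basis (α + β) :=
    fun α β => ⟨Q.d α β, by simp only [Q.basis_eq, Q.x_mul]⟩
  have hy : ∀ a, ∃ k : Kˣ, Q.latticeChar hc hL ρ a = (k : K) • Q.basis a :=
    fun a => ⟨_, (Q.latticeChar_apply hc hL ρ a).trans (by rw [Q.basis_eq])⟩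
  obtain ⟨⟨bas, hbas⟩, htwist⟩ := exists_basis_map_transversal_twisted hb hy
    (Q.commute_latticeChar hc hL ρ) hσ hsurj hψy fun t => (hker' t).mp
  simp only [Q.basis_eq] at hbas htwist
  choose e he using htwist
  exact ⟨⟨bas, hbas⟩, e, he⟩
end

section
/- If B is a binomial ideal of the quantum affine space A_q, then the relation α ∼ β ⟺ K·(x^α + B) = K·(x^β + B) is a monoid congruence on (ℤ_{≥0})^n, and A_q/B = ⊕_{s ∈ S} R_s is a grading by the quotient monoid S = (ℤ_{≥0})^n/∼, where R_s = K·(x^α + B) for any α ∈ s. Moreover, if B contains no monomials, then A_q/B is a twisted semigroup algebra K^e S. -/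
/-- A quantum affine space `O_q(Kⁿ)`: an algebra `A` with basis
`(x^α)_{α ∈ ℕⁿ}` and multiplication `x^α x^β = d(α,β) x^{α+β}` where
`d(α,β) = ∏_{i>j} q_{ij}^{α_i β_j}` for a multiplicatively skew-symmetric
matrix `q`. -/
structure QuantumAffine (K : Type) [Field K] (n : ℕ) (A : Type) [Ring A] [Algebra K A] where
  q : Fin n → Fin n → Kˣ
  q_diag : ∀ i, q i i = 1
  q_skew : ∀ i j, q j i = (q i j)⁻¹
  d : (Fin n → ℕ) → (Fin n → ℕ) → Kˣ
  d_eq : ∀ α β, d α β = ∏ i : Fin n, ∏ j : Fin n,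
      if (j : ℕ) < (i : ℕ) then q i j ^ (α i * β j) else 1
  x : (Fin n → ℕ) → A
  basis : Module.Basis (Fin n → ℕ) K A
  basis_eq : ∀ α, basis α = x α
  x_mul : ∀ α β, x α * x β = ((d α β : K)) • x (α + β)
  x_zero : x 0 = 1

namespace QuantumAffine

variable {K : Type} [Field K] {n : ℕ} {A : Type} [Ring A] [Algebra K A]

/-- A binomial ideal of a quantum affine space: a two-sided ideal generated by
nonzero elements `λ x^α + μ x^β` with `α, β ∈ ℕⁿ`. -/
def IsBinomialIdeal (Q : QuantumAffine K n A) (B : TwoSidedIdeal A) : Prop :=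
  ∃ S : Set A,
    (∀ b ∈ S, b ≠ 0 ∧ ∃ (l m : K) (α β : Fin n → ℕ), b = l • Q.x α + m • Q.x β) ∧
    B = TwoSidedIdeal.span S

/-- The relation `α ∼ β ⟺ K·(x^α + B) = K·(x^β + B)` on `ℕⁿ`. -/
def rel (Q : QuantumAffine K n A) (B : TwoSidedIdeal A) (α β : Fin n → ℕ) : Prop :=
  (Q.x α ∈ B ∧ Q.x β ∈ B) ∨ ∃ lam : Kˣ, Q.x α - ((lam : K)) • Q.x β ∈ B

end QuantumAffine

/-!
`B` is spanned over `K` by the binomials `l x^α + m x^β` it contains: their span is already a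
two-sided ideal, since a monomial times a binomial is a binomial.

For a quotient map `ψ` with kernel `B`, `α ∼ β` says that `ψ(x^α)` and `ψ(x^β)` span the same
line. Since `x^α x^γ` is a unit multiple of `x^(α+γ)`, this is a congruence, and the lines
`K ψ(x^s)` multiply as in a twisted semigroup algebra. They are independent because of the
functionals sending `x^α` to its coordinate along `ψ(x^(σ α))` when `σ α = s`, and to `0`
otherwise. A binomial in `B` either has both terms in one class, where the coordinates cancel,
or has both terms in `B`. So these functionals kill `B` and descend to `A/B`. If `B` contains no
monomial, every `ψ(x^s)` is nonzero and the lines give a basis.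
-/

open Submodule

theorem iSupIndep_span_singleton_of_dual {ι K M : Type*} [Field K] [AddCommGroup M]
    [Module K M] (v : ι → M) (f : ι → Module.Dual K M) (h_ne : ∀ i j, i ≠ j → f i (v j) = 0)
    (h_self : ∀ i, f i (v i) = 0 → v i = 0) : iSupIndep fun i => K ∙ v i := by
  refine iSupIndep_def.2 fun i => disjoint_def.2 fun x hx hsup => ?_
  obtain ⟨k, rfl⟩ := mem_span_singleton.1 hx
  have hker : (⨆ j, ⨆ (_ : j ≠ i), K ∙ v j) ≤ LinearMap.ker (f i) :=
    iSup₂_le fun j hj => (span_singleton_le_iff_mem _ _).2 (h_ne i j (Ne.symm hj))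
  have hk : k * f i (v i) = 0 := by simpa using hker hsup
  rcases mul_eq_zero.1 hk with rfl | h
  · exact zero_smul _ _
  · rw [h_self i h, smul_zero]

theorem Module.Dual.exists_comp_eq_of_surjective {R M M' : Type*} [CommRing R] [AddCommGroup M]
    [Module R M] [AddCommGroup M'] [Module R M'] {ψ : M →ₗ[R] M'} (hψ : Function.Surjective ψ)
    {f : Module.Dual R M} (hf : ∀ a, ψ a = 0 → f a = 0) :
    ∃ g : Module.Dual R M', ∀ a, g (ψ a) = f a := by
  have : f ∈ LinearMap.range ψ.dualMap := by
    rw [LinearMap.range_dualMap_eq_dualAnnihilator_ker_of_surjective ψ hψ, mem_dualAnnihilator]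
    exact hf
  obtain ⟨g, rfl⟩ := this
  exact ⟨g, fun _ => rfl⟩

namespace QuantumAffine

variable {K : Type} [Field K] {n : ℕ} {A : Type} [Ring A] [Algebra K A]
  (Q : QuantumAffine K n A)

theorem span_range_x : span K (Set.range Q.x) = ⊤ := by
  rw [← Q.basis.span_eq, funext Q.basis_eq]

/-- The elements `l x^α + m x^β`, monomials and `0` included. -/
def binomials : Set A := {b | ∃ (l m : K) (α β : Fin n → ℕ), b = l • Q.x α + m • Q.x β}

theorem x_mul_mem_binomials (γ : Fin n → ℕ) {b : A} (hb : b ∈ Q.binomials) :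
    Q.x γ * b ∈ Q.binomials := by
  obtain ⟨l, m, α, β, rfl⟩ := hb
  refine ⟨l * Q.d γ α, m * Q.d γ β, γ + α, γ + β, ?_⟩
  rw [mul_add, mul_smul_comm, mul_smul_comm, Q.x_mul, Q.x_mul, smul_smul, smul_smul]

theorem mul_x_mem_binomials (γ : Fin n → ℕ) {b : A} (hb : b ∈ Q.binomials) :
    b * Q.x γ ∈ Q.binomials := by
  obtain ⟨l, m, α, β, rfl⟩ := hb
  refine ⟨l * Q.d α γ, m * Q.d β γ, α + γ, β + γ, ?_⟩
  rw [add_mul, smul_mul_assoc, smul_mul_assoc, Q.x_mul, Q.x_mul, smul_smul, smul_smul]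

variable {Q}

theorem IsBinomialIdeal.mem_span_binomials {B : TwoSidedIdeal A} (hB : Q.IsBinomialIdeal B)
    {a : A} (ha : a ∈ B) : a ∈ span K ((B : Set A) ∩ Q.binomials) := by
  set V := span K ((B : Set A) ∩ Q.binomials)
  have mul_mem_left (b : A) {v : A} (hv : v ∈ V) : b * v ∈ V := by
    have : (⊤ : Submodule K A) * V ≤ V := by
      rw [← Q.span_range_x, span_mul_span, span_le]
      rintro _ ⟨_, ⟨γ, rfl⟩, v, ⟨hvB, hv⟩, rfl⟩
      exact subset_span ⟨B.mul_mem_left _ _ hvB, Q.x_mul_mem_binomials γ hv⟩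
    exact this (mul_mem_mul mem_top hv)
  have mul_mem_right (b : A) {v : A} (hv : v ∈ V) : v * b ∈ V := by
    have : V * (⊤ : Submodule K A) ≤ V := by
      rw [← Q.span_range_x, span_mul_span, span_le]
      rintro _ ⟨v, ⟨hvB, hv⟩, _, ⟨γ, rfl⟩, rfl⟩
      exact subset_span ⟨B.mul_mem_right _ _ hvB, Q.mul_x_mem_binomials γ hv⟩
    exact this (mul_mem_mul hv mem_top)
  let I : TwoSidedIdeal A := .mk' V V.zero_mem V.add_mem V.neg_mem
    (mul_mem_left _) (mul_mem_right _)
  obtain ⟨S, hS, rfl⟩ := hB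
  have hSI : TwoSidedIdeal.span S ≤ I := TwoSidedIdeal.span_le.2 fun b hb =>
    (TwoSidedIdeal.mem_mk' ..).2 (subset_span ⟨TwoSidedIdeal.subset_span hb, (hS b hb).2⟩)
  exact (TwoSidedIdeal.mem_mk' ..).1 (hSI ha)

section Quotient

variable {B : TwoSidedIdeal A} {R : Type*} [Ring R] [Algebra K R] {ψ : A →ₐ[K] R}

theorem rel_iff_span_eq (hψ : ∀ a, ψ a = 0 ↔ a ∈ B) {α β : Fin n → ℕ} :
    Q.rel B α β ↔ (K ∙ ψ (Q.x α)) = K ∙ ψ (Q.x β) := by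
  rw [eq_comm, span_singleton_eq_span_singleton, rel]
  simp only [← hψ, map_sub, map_smul, sub_eq_zero, Units.smul_def]
  constructor
  · rintro (⟨hα, hβ⟩ | ⟨u, hu⟩)
    · exact ⟨1, by rw [hα, hβ, smul_zero]⟩
    · exact ⟨u, hu.symm⟩
  · rintro ⟨u, hu⟩
    exact Or.inr ⟨u, hu.symm⟩

theorem span_x_mul_x (α β : Fin n → ℕ) :
    (K ∙ (ψ (Q.x α) * ψ (Q.x β))) = K ∙ ψ (Q.x (α + β)) := by
  rw [← map_mul, Q.x_mul, map_smul, span_singleton_smul_eq (Q.d α β).isUnit]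

variable (Q B) in
theorem ringCon_mkₐ_eq_zero_iff (a : A) : B.ringCon.mkₐ K a = 0 ↔ a ∈ B := by
  conv_rhs => rw [← TwoSidedIdeal.ker_ringCon_mk' B, TwoSidedIdeal.mem_ker]
  rfl

variable (Q B) in
theorem rel_equivalence : Equivalence (Q.rel B) := by
  have h α β := rel_iff_span_eq (Q := Q) (ringCon_mkₐ_eq_zero_iff B) (α := α) (β := β)
  exact ⟨fun α => (h α α).2 rfl, fun hab => (h _ _).2 ((h _ _).1 hab).symm,
    fun h₁ h₂ => (h _ _).2 (((h _ _).1 h₁).trans ((h _ _).1 h₂))⟩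

theorem rel_add_right {α β : Fin n → ℕ} (γ : Fin n → ℕ) (h : Q.rel B α β) :
    Q.rel B (α + γ) (β + γ) := by
  rw [rel_iff_span_eq (ringCon_mkₐ_eq_zero_iff B)] at h ⊢
  obtain ⟨u, hu⟩ := span_singleton_eq_span_singleton.1 h
  rw [← span_x_mul_x, ← span_x_mul_x, ← hu, smul_mul_assoc, span_singleton_group_smul_eq]

theorem rel_add_add {α α' β β' : Fin n → ℕ} (hα : Q.rel B α α') (hβ : Q.rel B β β') :
    Q.rel B (α + β) (α' + β') :=
  (rel_equivalence Q B).trans (rel_add_right β hα)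
    (by simpa only [add_comm α'] using rel_add_right α' hβ)

section Representatives

variable (hψ : ∀ a, ψ a = 0 ↔ a ∈ B) {σ : (Fin n → ℕ) → (Fin n → ℕ)}
  (hσ : ∀ α, Q.rel B α (σ α))
include hψ hσ

theorem span_x_mul_x_eq_span_x_add (α β : Fin n → ℕ) :
    (K ∙ (ψ (Q.x (σ α)) * ψ (Q.x (σ β)))) = K ∙ ψ (Q.x (σ (α + β))) := by
  rw [span_x_mul_x, ← rel_iff_span_eq hψ]
  exact (rel_equivalence Q B).trans ((rel_equivalence Q B).symm (rel_add_add (hσ α) (hσ β)))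
    (hσ _)

theorem exists_x_mul_x_eq_smul_x_add (α β : Fin n → ℕ) :
    ∃ e : Kˣ, ψ (Q.x (σ α)) * ψ (Q.x (σ β)) = (e : K) • ψ (Q.x (σ (α + β))) := by
  obtain ⟨e, he⟩ :=
    span_singleton_eq_span_singleton.1 (span_x_mul_x_eq_span_x_add hψ hσ α β).symm
  exact ⟨e, he.symm⟩

theorem mul_mem_span_x_add {α β : Fin n → ℕ} {a b : R} (ha : a ∈ K ∙ ψ (Q.x (σ α)))
    (hb : b ∈ K ∙ ψ (Q.x (σ β))) : a * b ∈ K ∙ ψ (Q.x (σ (α + β))) := by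
  obtain ⟨k, rfl⟩ := mem_span_singleton.1 ha
  obtain ⟨k', rfl⟩ := mem_span_singleton.1 hb
  rw [← span_x_mul_x_eq_span_x_add hψ hσ, smul_mul_smul_comm]
  exact smul_mem _ _ (mem_span_singleton_self _)

theorem iSup_span_x_eq_top (hsurj : Function.Surjective ψ) :
    (⨆ s : Set.range σ, K ∙ ψ (Q.x s)) = ⊤ := by
  rw [eq_top_iff, ← LinearMap.range_eq_top.2 (show Function.Surjective ψ.toLinearMap from hsurj),
    LinearMap.range_eq_map, ← Q.span_range_x, map_span, span_le]
  rintro _ ⟨_, ⟨α, rfl⟩, rfl⟩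
  have hα : ψ (Q.x α) ∈ K ∙ ψ (Q.x (σ α)) :=
    (rel_iff_span_eq hψ).1 (hσ α) ▸ mem_span_singleton_self _
  exact le_iSup (fun s : Set.range σ => K ∙ ψ (Q.x s)) ⟨σ α, α, rfl⟩ hα

theorem exists_x_eq_smul_x_rep (α : Fin n → ℕ) :
    ∃ c : K, ψ (Q.x α) = c • ψ (Q.x (σ α)) ∧ (ψ (Q.x α) = 0 → c = 0) := by
  by_cases h : ψ (Q.x α) = 0
  · exact ⟨0, by rw [h, zero_smul], fun _ => rfl⟩
  · obtain ⟨u, hu⟩ :=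
      span_singleton_eq_span_singleton.1 ((rel_iff_span_eq hψ).1 (hσ α)).symm
    exact ⟨u, hu.symm, fun h' => absurd h' h⟩

end Representatives

variable (Q) in
noncomputable def classFunctional (σ : (Fin n → ℕ) → (Fin n → ℕ)) (c : (Fin n → ℕ) → K)
    (τ : Fin n → ℕ) : Module.Dual K A :=
  Q.basis.constr K fun α => if σ α = τ then c α else 0

theorem classFunctional_x {σ : (Fin n → ℕ) → (Fin n → ℕ)} {c : (Fin n → ℕ) → K}
    {τ : Fin n → ℕ} (α : Fin n → ℕ) :
    Q.classFunctional σ c τ (Q.x α) = if σ α = τ then c α else 0 := by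
  rw [classFunctional, ← Q.basis_eq, Module.Basis.constr_basis]

section ClassFunctional

variable (hψ : ∀ a, ψ a = 0 ↔ a ∈ B) {σ : (Fin n → ℕ) → (Fin n → ℕ)}
  (hσ_eq : ∀ α β, Q.rel B α β ↔ σ α = σ β) {c : (Fin n → ℕ) → K}
  (hc : ∀ α, ψ (Q.x α) = c α • ψ (Q.x (σ α))) (hc0 : ∀ α, ψ (Q.x α) = 0 → c α = 0)
include hψ hσ_eq hc hc0

theorem classFunctional_binomial_eq_zero {l m : K} {α β : Fin n → ℕ}
    (h : l • Q.x α + m • Q.x β ∈ B) (τ : Fin n → ℕ) :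
    Q.classFunctional σ c τ (l • Q.x α + m • Q.x β) = 0 := by
  have h' : l • ψ (Q.x α) + m • ψ (Q.x β) = 0 := by simpa using (hψ _).2 h
  have smul_coeff {k : K} {γ : Fin n → ℕ} (hk : k • ψ (Q.x γ) = 0) : k * c γ = 0 :=
    (smul_eq_zero.1 hk).elim (fun h => by rw [h, zero_mul]) (fun h => by rw [hc0 _ h, mul_zero])
  simp only [map_add, map_smul, classFunctional_x, smul_eq_mul]
  by_cases hαβ : σ α = σ β
  · rw [← hαβ]
    split_ifs
    · have hs : (l * c α + m * c β) • ψ (Q.x (σ α)) = 0 := by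
        rw [add_smul, mul_smul, mul_smul, ← hc, hαβ, ← hc, h']
      rcases smul_eq_zero.1 hs with h0 | h0
      · exact h0
      · rw [hc0 α (by rw [hc, h0, smul_zero]), hc0 β (by rw [hc, ← hαβ, h0, smul_zero])]
        ring
    · ring
  · -- otherwise `l ψ(x^α) = -m ψ(x^β) ≠ 0` would make `α ∼ β`
    have hl : l • ψ (Q.x α) = 0 := by
      by_contra hl
      have hlm : l • ψ (Q.x α) = (-m) • ψ (Q.x β) := by
        rw [neg_smul, eq_neg_of_add_eq_zero_left h']
      refine hαβ ((hσ_eq α β).1 ((rel_iff_span_eq hψ).2 ?_))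
      rw [← span_singleton_smul_eq (left_ne_zero_of_smul hl).isUnit, hlm,
        span_singleton_smul_eq (left_ne_zero_of_smul (hlm ▸ hl)).isUnit]
    have hm : m • ψ (Q.x β) = 0 := by rwa [hl, zero_add] at h'
    split_ifs <;> simp [smul_coeff hl, smul_coeff hm]

theorem classFunctional_eq_zero_of_mem (hB : Q.IsBinomialIdeal B) {a : A} (ha : a ∈ B)
    (τ : Fin n → ℕ) : Q.classFunctional σ c τ a = 0 := by
  refine (span_le (p := LinearMap.ker _)).2 ?_ (hB.mem_span_binomials ha)
  rintro _ ⟨hb, l, m, α, β, rfl⟩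
  exact classFunctional_binomial_eq_zero hψ hσ_eq hc hc0 hb τ

end ClassFunctional

section Grading

variable (hB : Q.IsBinomialIdeal B) (hsurj : Function.Surjective ψ)
  (hψ : ∀ a, ψ a = 0 ↔ a ∈ B) {σ : (Fin n → ℕ) → (Fin n → ℕ)}
  (hσ : ∀ α, Q.rel B α (σ α)) (hσ_eq : ∀ α β, Q.rel B α β ↔ σ α = σ β)
include hB hsurj hψ hσ hσ_eq

theorem iSupIndep_span_x : iSupIndep fun s : Set.range σ => K ∙ ψ (Q.x s) := by
  choose c hc hc0 using exists_x_eq_smul_x_rep hψ hσ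
  have hσσ (s : Set.range σ) : σ s = s := by
    obtain ⟨_, α, rfl⟩ := s
    exact ((hσ_eq _ _).1 (hσ α)).symm
  have hg (s : Set.range σ) :
      ∃ g : Module.Dual K R, ∀ a, g (ψ a) = Q.classFunctional σ c s a :=
    Module.Dual.exists_comp_eq_of_surjective (ψ := ψ.toLinearMap) hsurj fun a ha =>
      classFunctional_eq_zero_of_mem hψ hσ_eq hc hc0 hB ((hψ a).1 ha) s
  choose g hg using hg
  refine iSupIndep_span_singleton_of_dual _ g (fun s t hst => ?_) (fun s h => ?_)
  · rw [hg, classFunctional_x, if_neg (by rw [hσσ]; exact fun h => hst (Subtype.ext h).symm)]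
  · rw [hg, classFunctional_x, if_pos (hσσ s)] at h
    rw [hc, h, zero_smul]

theorem exists_basis_x (hmon : ∀ γ, Q.x γ ∉ B) :
    ∃ bas : Module.Basis (Set.range σ) K R, ∀ s, bas s = ψ (Q.x s) := by
  have hli : LinearIndependent K fun s : Set.range σ => ψ (Q.x s) :=
    (iSupIndep_span_x hB hsurj hψ hσ hσ_eq).linearIndependent _
      (fun s => mem_span_singleton_self _) fun s h => hmon s ((hψ _).1 h)
  exact ⟨.mk hli (by rw [span_range_eq_iSup, iSup_span_x_eq_top hψ hσ hsurj]),
    Module.Basis.mk_apply hli _⟩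

end Grading

end Quotient
end QuantumAffine

/-- For a binomial ideal `B` of the quantum affine space `A_q`, the relation
`α ∼ β ⟺ K·(x^α+B) = K·(x^β+B)` is a monoid congruence on `ℕⁿ`, and `A_q/B`
(represented by any surjection `ψ` with kernel `B`) is graded by the quotient
monoid, with components the lines `K·ψ(x^{σ s})` for a choice `σ` of class
representatives; if `B` contains no monomials, `A_q/B` is a twisted semigroup
algebra. -/
theorem quotient_binomial_graded {K : Type} [Field K] {n : ℕ} {A : Type} [Ring A]
    [Algebra K A] (Q : QuantumAffine K n A) (B : TwoSidedIdeal A)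
    (hB : Q.IsBinomialIdeal B) :
    Equivalence (Q.rel B) ∧
    (∀ α β γ : Fin n → ℕ, Q.rel B α β → Q.rel B (α + γ) (β + γ)) ∧
    ∀ (R : Type) [Ring R] [Algebra K R] (ψ : A →ₐ[K] R),
      Function.Surjective ψ → (∀ a : A, ψ a = 0 ↔ a ∈ B) →
      ∀ σ : (Fin n → ℕ) → (Fin n → ℕ),
        (∀ α, Q.rel B α (σ α)) → (∀ α β, (Q.rel B α β ↔ σ α = σ β)) →
        iSupIndep (fun s : Set.range σ => Submodule.span K {ψ (Q.x (s : Fin n → ℕ))}) ∧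
        (⨆ s : Set.range σ, Submodule.span K {ψ (Q.x (s : Fin n → ℕ))}) = ⊤ ∧
        (∀ α β : Fin n → ℕ, ∀ a ∈ Submodule.span K {ψ (Q.x (σ α))},
          ∀ b ∈ Submodule.span K {ψ (Q.x (σ β))},
            a * b ∈ Submodule.span K {ψ (Q.x (σ (α + β)))}) ∧
        ((∀ γ : Fin n → ℕ, Q.x γ ∉ B) →
          (∃ bas : Module.Basis (Set.range σ) K R, ∀ s, bas s = ψ (Q.x (s : Fin n → ℕ))) ∧
          ∃ e : (Fin n → ℕ) → (Fin n → ℕ) → Kˣ,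
            ∀ α β, ψ (Q.x (σ α)) * ψ (Q.x (σ β)) =
              ((e α β : K)) • ψ (Q.x (σ (α + β)))) := by
  refine ⟨Q.rel_equivalence B, fun α β γ => QuantumAffine.rel_add_right γ,
    fun R _ _ ψ hsurj hψ σ hσ hσ_eq => ?_⟩
  choose e he using QuantumAffine.exists_x_mul_x_eq_smul_x_add hψ hσ
  exact ⟨QuantumAffine.iSupIndep_span_x hB hsurj hψ hσ hσ_eq,
    QuantumAffine.iSup_span_x_eq_top hψ hσ hsurj,
    fun α β a ha b hb => QuantumAffine.mul_mem_span_x_add hψ hσ ha hb,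
    fun hmon => ⟨QuantumAffine.exists_basis_x hB hsurj hψ hσ hσ_eq hmon, e, he⟩⟩
end

section
/- Let R ≅ K^e S be a twisted semigroup algebra of a finitely generated commutative monoid S over an algebraically closed field K, and suppose R is a domain. Then S is cancellative and its universal (Grothendieck) group G is torsionfree; consequently R is a quantum affine toric variety. -/
open Polynomial in
theorem exists_eq_smul_of_pow_eq_smul_pow {K A : Type*} [Field K] [IsAlgClosed K] [CommRing A]
    [IsDomain A] [Algebra K A] {x y : A} {n : ℕ} (hn : n ≠ 0) {r : K}
    (h : x ^ n = r • y ^ n) : ∃ ρ : K, x = ρ • y := by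
  rcases eq_or_ne y 0 with rfl | hy
  · exact ⟨0, by simpa [hn] using h⟩
  let F := FractionRing A
  have hy' : algebraMap A F y ≠ 0 := by simpa using hy
  have hroot :
      ((X ^ n - C r).map (algebraMap K F)).IsRoot (algebraMap A F x / algebraMap A F y) := by
    have := congrArg (algebraMap A F) h
    simp only [map_pow, Algebra.smul_def, map_mul, ← IsScalarTower.algebraMap_apply] at this
    simp [div_pow, this, hy']
  obtain ⟨ρ, hρ⟩ := (IsAlgClosed.splits _).mem_range_of_isRoot
    (X_pow_sub_C_ne_zero (Nat.pos_of_ne_zero hn) r) hroot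
  refine ⟨ρ, IsFractionRing.injective A F ?_⟩
  rw [Algebra.smul_def, map_mul, ← IsScalarTower.algebraMap_apply, hρ, div_mul_cancel₀ _ hy']

theorem Commute.exists_eq_smul_of_pow_eq_smul_pow {K R : Type*} [Field K] [IsAlgClosed K]
    [Ring R] [IsDomain R] [Algebra K R] {x y : R} (hxy : Commute x y) {n : ℕ} (hn : n ≠ 0)
    {r : K} (h : x ^ n = r • y ^ n) : ∃ ρ : K, x = ρ • y := by
  let A := Algebra.adjoin K ({x, y} : Set R)
  have hA : IsMulCommutative A := Algebra.isMulCommutative_adjoin K <| by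
    simp only [Set.mem_insert_iff, Set.mem_singleton_iff]
    rintro a (rfl | rfl) b (rfl | rfl) <;> first | rfl | exact hxy.eq | exact hxy.eq.symm
  let _ : CommRing A := { (inferInstance : Ring A) with mul_comm := hA.is_comm.comm }
  have hx : x ∈ A := Algebra.subset_adjoin (by simp)
  have hy : y ∈ A := Algebra.subset_adjoin (by simp)
  obtain ⟨ρ, hρ⟩ := _root_.exists_eq_smul_of_pow_eq_smul_pow (x := (⟨x, hx⟩ : A))
    (y := ⟨y, hy⟩) hn (r := r) (Subtype.ext h)
  exact ⟨ρ, congrArg Subtype.val hρ⟩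

namespace Algebra.GrothendieckAddGroup

variable {M : Type*} [AddCommMonoid M]

theorem exists_eq_of_sub_of (g : GrothendieckAddGroup M) : ∃ s t : M, g = of s - of t := by
  induction g using AddLocalization.ind with
  | H p => exact ⟨p.1, p.2, by simp [of, ← AddLocalization.mk_zero_eq_addMonoidOf_mk]⟩

instance [AddMonoid.FG M] : AddGroup.FG (GrothendieckAddGroup M) := by
  rw [AddGroup.fg_iff_addMonoid_fg]
  refine AddMonoid.fg_of_surjective
    (of.comp (AddMonoidHom.fst M M) - of.comp (AddMonoidHom.snd M M)) fun g => ?_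
  obtain ⟨s, t, rfl⟩ := exists_eq_of_sub_of g
  exact ⟨(s, t), rfl⟩

instance [IsCancelAdd M] [IsAddTorsionFree M] : IsAddTorsionFree (GrothendieckAddGroup M) where
  nsmul_right_injective m hm g g' h := by
    obtain ⟨s, t, rfl⟩ := exists_eq_of_sub_of g
    obtain ⟨s', t', rfl⟩ := exists_eq_of_sub_of g'
    have : m • (s + t') = m • (s' + t) := of_injective <| by
      simpa only [smul_sub, sub_eq_sub_iff_add_eq_add, ← map_nsmul, ← map_add, nsmul_add]
        using h
    rw [sub_eq_sub_iff_add_eq_add, ← map_add, ← map_add, nsmul_right_injective hm this]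

end Algebra.GrothendieckAddGroup

theorem AddCommMonoid.exists_injective_addMonoidHom_fin_int (M : Type*) [AddCommMonoid M]
    [AddMonoid.FG M] [IsCancelAdd M] [IsAddTorsionFree M] :
    ∃ (r : ℕ) (f : M →+ (Fin r → ℤ)), Function.Injective f := by
  let G := Algebra.GrothendieckAddGroup M
  have : Module.Finite ℤ G := Module.Finite.iff_addGroup_fg.mpr inferInstance
  let φ := (Module.finBasis ℤ G).equivFun
  exact ⟨_, φ.toAddMonoidHom.comp Algebra.GrothendieckAddGroup.of,
    φ.injective.comp Algebra.GrothendieckAddGroup.of_injective⟩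

namespace Module.Basis

variable {K R S : Type*} [Field K] [Ring R] [Algebra K R] (b : Basis S K R)

theorem eq_of_apply_eq_smul {s t : S} {c : K} (h : b s = c • b t) : s = t :=
  b.linearIndependent.eq_of_smul_apply_eq_smul_apply 1 c s t one_ne_zero (by rwa [one_smul])

def IsMonomial (u : R) (s : S) : Prop := ∃ c : Kˣ, u = (c : K) • b s

theorem isMonomial_apply (s : S) : b.IsMonomial (b s) s := ⟨1, by simp⟩

theorem IsMonomial.exists_eq_smul {b : Basis S K R} {u v : R} {s : S} (hu : b.IsMonomial u s)
    (hv : b.IsMonomial v s) : ∃ r : K, u = r • v := by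
  obtain ⟨c, rfl⟩ := hu
  obtain ⟨d, rfl⟩ := hv
  exact ⟨(c / d : Kˣ), by simp [smul_smul]⟩

variable [AddCommMonoid S]

/-- `R ≅ K^e S` with `z_s = b s`. -/
def IsTwistedSemigroupBasis : Prop := ∀ s t, ∃ c : Kˣ, b s * b t = (c : K) • b (s + t)

variable {b} {u v : R} {s t : S}

theorem IsMonomial.mul (hb : b.IsTwistedSemigroupBasis) (hu : b.IsMonomial u s)
    (hv : b.IsMonomial v t) : b.IsMonomial (u * v) (s + t) := by
  obtain ⟨c, rfl⟩ := hu
  obtain ⟨d, rfl⟩ := hv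
  obtain ⟨e, he⟩ := hb s t
  exact ⟨c * d * e, by rw [smul_mul_smul_comm, he, smul_smul, Units.val_mul, Units.val_mul]⟩

theorem IsTwistedSemigroupBasis.isMonomial_one [NoZeroDivisors R]
    (hb : b.IsTwistedSemigroupBasis) : b.IsMonomial 1 0 := by
  obtain ⟨e, he⟩ := hb 0 0
  have h : b 0 * b 0 = b 0 * ((e : K) • 1) := by rw [he, add_zero, mul_smul_comm, mul_one]
  refine ⟨e⁻¹, ?_⟩
  rw [mul_left_cancel₀ (b.ne_zero 0) h, smul_smul]
  simp

theorem IsMonomial.pow [NoZeroDivisors R] (hb : b.IsTwistedSemigroupBasis)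
    (hu : b.IsMonomial u s) (k : ℕ) : b.IsMonomial (u ^ k) (k • s) := by
  induction k with
  | zero => simpa using hb.isMonomial_one
  | succ k ih => simpa only [pow_succ, succ_nsmul] using ih.mul hb hu

namespace IsTwistedSemigroupBasis

theorem isCancelAdd [NoZeroDivisors R] (hb : b.IsTwistedSemigroupBasis) : IsCancelAdd S :=
  have : IsRightCancelAdd S := ⟨fun u s t h => by
    replace h : s + u = t + u := h
    obtain ⟨r, hr⟩ := ((b.isMonomial_apply s).mul hb (b.isMonomial_apply u)).exists_eq_smul
      (h ▸ (b.isMonomial_apply t).mul hb (b.isMonomial_apply u))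
    rw [← smul_mul_assoc] at hr
    exact b.eq_of_apply_eq_smul (mul_right_cancel₀ (b.ne_zero u) hr)⟩
  AddCommMagma.IsRightCancelAdd.toIsCancelAdd S

theorem isAddTorsionFree [IsDomain R] [IsAlgClosed K] (hb : b.IsTwistedSemigroupBasis) :
    IsAddTorsionFree S where
  nsmul_right_injective m hm s t h := by
    obtain ⟨n, rfl⟩ := Nat.exists_eq_succ_of_ne_zero hm
    replace h : (n + 1) • s = (n + 1) • t := h
    have hs := b.isMonomial_apply s
    have ht := b.isMonomial_apply t
    obtain ⟨r, hr⟩ := (ht.pow hb (n + 1)).exists_eq_smul (h ▸ hs.pow hb (n + 1))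
    have hsm : Commute (b s) (b t ^ (n + 1)) := hr ▸ (Commute.self_pow _ _).smul_right r
    have hum : Commute (b s * b t ^ n) (b t ^ (n + 1)) :=
      hsm.mul_left (Commute.pow_pow_self _ _ _)
    have hdeg : (n + 1) • (s + n • t) = (n + 1) • ((n + 1) • t) := by
      rw [nsmul_add, h, ← nsmul_add, ← succ_nsmul']
    obtain ⟨r', hr'⟩ := (hdeg ▸ ((hs.mul hb (ht.pow hb n)).pow hb (n + 1))).exists_eq_smul
      ((ht.pow hb (n + 1)).pow hb (n + 1))
    obtain ⟨ρ, hρ⟩ := hum.exists_eq_smul_of_pow_eq_smul_pow n.succ_ne_zero hr'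
    have : (b s - ρ • b t) * b t ^ n = 0 := by
      rw [sub_mul, smul_mul_assoc, ← pow_succ', hρ, sub_self]
    exact b.eq_of_apply_eq_smul <| sub_eq_zero.mp <|
      (mul_eq_zero.mp this).resolve_right (pow_ne_zero _ (b.ne_zero t))

theorem reindex {T : Type*} [AddCommMonoid T] (hb : b.IsTwistedSemigroupBasis) (φ : S ≃+ T) :
    (b.reindex φ.toEquiv).IsTwistedSemigroupBasis := fun s t => by
  simpa [Basis.reindex_apply] using hb (φ.symm s) (φ.symm t)

end IsTwistedSemigroupBasis

end Module.Basis

/-- If `R ≅ K^e S` is a twisted semigroup algebra of a finitely generated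
commutative monoid over an algebraically closed field and `R` is a domain, then
`S` is cancellative, its universal (Grothendieck) group is torsionfree, and
consequently `R` is a quantum affine toric variety, i.e. a twisted semigroup
algebra of a finitely generated submonoid of a free abelian group of finite
rank. -/
theorem twisted_semigroup_algebra_domain_toric {K : Type} [Field K] [IsAlgClosed K]
    (R : Type) [Ring R] [Algebra K R] [IsDomain R]
    (S : Type) [AddCommMonoid S] (hFG : AddMonoid.FG S)
    (e : S → S → Kˣ) (z : S → R) (bas : Module.Basis S K R)
    (hbas : ∀ s, bas s = z s)
    (hmul : ∀ s t, z s * z t = ((e s t : K)) • z (s + t)) :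
    (∀ s t u : S, s + u = t + u → s = t) ∧
    (∃ (G : Type) (_ : AddCommGroup G) (ι : S →+ G),
      Function.Injective ι ∧ (∀ g : G, ∃ s t : S, g = ι s - ι t) ∧
      ∀ (g : G) (m : ℕ), m ≠ 0 → m • g = 0 → g = 0) ∧
    (∃ (r : ℕ) (S' : AddSubmonoid (Fin r → ℤ)) (_ : S'.FG)
        (e' : S' → S' → Kˣ) (z' : S' → R) (bas' : Module.Basis S' K R),
        (∀ s, bas' s = z' s) ∧
        ∀ s t, z' s * z' t = ((e' s t : K)) • z' (s + t)) := by
  obtain rfl : ⇑bas = z := funext hbas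
  have hb : bas.IsTwistedSemigroupBasis := fun s t => ⟨e s t, hmul s t⟩
  have := hb.isCancelAdd
  have := hb.isAddTorsionFree
  obtain ⟨r, f, hf⟩ := AddCommMonoid.exists_injective_addMonoidHom_fin_int S
  choose e' he' using hb.reindex (AddEquiv.ofLeftInverse' f (Function.leftInverse_invFun hf))
  refine ⟨fun _ _ _ => add_right_cancel, ⟨Algebra.GrothendieckAddGroup S, inferInstance,
    Algebra.GrothendieckAddGroup.of, Algebra.GrothendieckAddGroup.of_injective,
    Algebra.GrothendieckAddGroup.exists_eq_of_sub_of,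
    fun _ _ hm => (nsmul_eq_zero_iff_right hm).mp⟩,
    r, AddMonoidHom.mrange f, (AddMonoid.fg_iff_addSubmonoid_fg _).mp inferInstance, e', _, _,
    fun _ => rfl, he'⟩
end

section
/- Let R be a ring, I an ideal, and x_1,…,x_n normal elements of R (x_iR = Rx_i). Let x_• be the multiplicative set generated by x_1,…,x_n and (I : x_•) = {a ∈ R | a·y ∈ I for some y ∈ x_•}. Then √I = √(I : x_•) ∩ √(I + ⟨x_1⟩) ∩ ⋯ ∩ √(I + ⟨x_n⟩). -/
lemma key {R : Type} [Ring R] {P : TwoSidedIdeal R} (hP : IsPrimeTSI P)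
    {x : R} (hx : Set.range (fun r : R => x * r) = Set.range (fun r : R => r * x))
    (hxP : x ∉ P) {a : R} (h : a * x ∈ P) : a ∈ P := by
  have h1 : ∀ r : R, a * r * x ∈ P := by
    intro r
    have : r * x ∈ Set.range (fun r : R => x * r) := hx ▸ ⟨r, rfl⟩
    obtain ⟨s, hs⟩ := this
    have h2 : a * r * x = (a * x) * s := by rw [mul_assoc, ← hs, ← mul_assoc]
    rw [h2]
    exact P.mul_mem_right _ _ h
  rcases hP.2 a x h1 with h' | h'
  · exact h'
  · exact absurd h' hxP

/-- For normal elements `x_1, …, x_n` of a ring `R`, an ideal `I`, the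
multiplicative set `x_•` generated by the `x_i`, and
`(I : x_•) = {a | a y ∈ I for some y ∈ x_•}`,
`√I = √(I : x_•) ∩ √(I + ⟨x_1⟩) ∩ ⋯ ∩ √(I + ⟨x_n⟩)`. -/
theorem primeRadical_eq_inf {R : Type} [Ring R] (I : TwoSidedIdeal R)
    {n : ℕ} (xs : Fin n → R)
    (hnormal : ∀ i, Set.range (fun r : R => xs i * r) =
      Set.range (fun r : R => r * xs i)) :
    primeRadical I =
      (sInf {P : TwoSidedIdeal R | IsPrimeTSI P ∧
          {a : R | ∃ y ∈ Submonoid.closure (Set.range xs), a * y ∈ I}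
            ⊆ (P : Set R)} :
        TwoSidedIdeal R) ⊓
      ⨅ i : Fin n, primeRadical (I ⊔ TwoSidedIdeal.span {xs i}) := by
  apply le_antisymm
  · refine le_inf ?_ (le_iInf fun i => ?_)
    · refine sInf_le_sInf fun P hP => ⟨hP.1, fun a ha => ?_⟩
      exact hP.2 ⟨1, Submonoid.one_mem _, by simpa using ha⟩
    · exact sInf_le_sInf fun P hP => ⟨hP.1, le_trans le_sup_left hP.2⟩
  · refine le_sInf fun P hP => ?_
    by_cases hx : ∃ i, xs i ∈ P
    · obtain ⟨i, hi⟩ := hx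
      refine le_trans inf_le_right (le_trans (iInf_le _ i) (sInf_le ⟨hP.1, sup_le hP.2 ?_⟩))
      intro z hz
      exact TwoSidedIdeal.mem_span_iff.mp hz P (by simpa using hi)
    · push_neg at hx
      refine le_trans inf_le_left (sInf_le ⟨hP.1, fun a ha => ?_⟩)
      obtain ⟨y, hy, hay⟩ := ha
      have H : ∀ y ∈ Submonoid.closure (Set.range xs), ∀ a : R, a * y ∈ P → a ∈ P := by
        intro y hy
        induction hy using Submonoid.closure_induction with
        | mem z hz =>
          obtain ⟨i, rfl⟩ := hz
          exact fun a h => key hP.1 (hnormal i) (hx i) h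
        | one => intro a h; simpa using h
        | mul u v _ _ hu hv =>
          intro a h
          exact hu a (hv (a * u) (by rwa [mul_assoc]))
      exact H y hy a (hP.2 hay)
end
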